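/- arXiv:1205.1844 — 5 statements merged into one kernel-verified Lean document; each statement's English description precedes it below -/
import Mathlib

section
/- Let T > 0, 0 < η < T, α > 0, β ≥ 0 be real constants with β ≠ (2T − αη²)/(αη² − 2η + 2T), and set D = (αη² − 2T) − β(2η − αη² − 2T). For every continuous function y : [0,T] → ℝ, the function u : [0,T] → ℝ defined by u(t) = ((β(2T − αη²) − 2β(1 − αη)t)/D) ∫₀^η (η − s) y(s) ds + ((αβη − α(β − 1)t)/D) ∫₀^η (η − s)² y(s) ds + ((2(β − 1)t − 2βη)/D) ∫₀^T (T − s) y(s) ds − ∫₀^t (t − s) y(s) ds is twice continuously differentiable on [0,T] and satisfies u''(t) + y(t) = 0 for all t ∈ (0,T), together with the boundary conditions u(0) = β u(η) and u(T) = α ∫₀^η u(s) ds. -/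
/-!
Writing `V t = ∫₀ᵗ (t - s) y(s) ds`, the given `u` is `u t = A t + B - V t` for constants `A`, `B`
built from `V η`, `V T` and `I₂ = ∫₀^η (η - s)² y(s) ds`. Since `V' t = ∫₀ᵗ y` and `V'' = y`,
we get `u'' = -y`. Cauchy's formula for repeated integration gives `∫₀^η V = I₂ / 2`, so both
boundary conditions become linear equations in `A`, `B`, which the given coefficients solve as
soon as `D ≠ 0`; that is exactly the hypothesis on `β`.
-/

open Set MeasureTheory

section
variable {f : ℝ → ℝ} {a b t : ℝ}

theorem ContinuousOn.intervalIntegrable_of_mem_Icc (hf : ContinuousOn f (Icc a b))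
    (ht : t ∈ Icc a b) : IntervalIntegrable f volume a t :=
  (hf.mono (uIcc_subset_Icc (left_mem_Icc.2 (ht.1.trans ht.2)) ht)).intervalIntegrable

theorem ContinuousOn.hasDerivWithinAt_integral_of_mem_Icc (hf : ContinuousOn f (Icc a b))
    (ht : t ∈ Icc a b) :
    HasDerivWithinAt (fun x => ∫ s in a..x, f s) (f t) (Icc a b) t :=
  have : Fact (t ∈ Icc a b) := ⟨ht⟩
  intervalIntegral.integral_hasDerivWithinAt_right (hf.intervalIntegrable_of_mem_Icc ht)
    (hf.stronglyMeasurableAtFilter_nhdsWithin measurableSet_Icc t) (hf t ht)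

theorem integral_sub_mul_eq (hf : IntervalIntegrable f volume a t)
    (hf₁ : IntervalIntegrable (fun s => s * f s) volume a t) :
    ∫ s in a..t, (t - s) * f s = t * (∫ s in a..t, f s) - ∫ s in a..t, s * f s := by
  simp_rw [sub_mul, intervalIntegral.integral_sub (hf.const_mul t) hf₁,
    intervalIntegral.integral_const_mul]

theorem integral_sub_sq_mul_eq (hf : IntervalIntegrable f volume a t)
    (hf₁ : IntervalIntegrable (fun s => s * f s) volume a t)
    (hf₂ : IntervalIntegrable (fun s => s ^ 2 * f s) volume a t) :
    ∫ s in a..t, (t - s) ^ 2 * f s =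
      t ^ 2 * (∫ s in a..t, f s) - 2 * t * (∫ s in a..t, s * f s) +
        ∫ s in a..t, s ^ 2 * f s := by
  have h₀ := hf.const_mul (t ^ 2)
  have h₁ := hf₁.const_mul (2 * t)
  calc ∫ s in a..t, (t - s) ^ 2 * f s
      = ∫ s in a..t, (t ^ 2 * f s - 2 * t * (s * f s) + s ^ 2 * f s) :=
        intervalIntegral.integral_congr fun s _ => by ring
    _ = _ := by
      rw [intervalIntegral.integral_add (h₀.sub h₁) hf₂, intervalIntegral.integral_sub h₀ h₁,
        intervalIntegral.integral_const_mul, intervalIntegral.integral_const_mul]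

theorem ContinuousOn.hasDerivWithinAt_integral_sub_mul (hf : ContinuousOn f (Icc a b))
    (ht : t ∈ Icc a b) :
    HasDerivWithinAt (fun x => ∫ s in a..x, (x - s) * f s) (∫ s in a..t, f s)
      (Icc a b) t := by
  have hf₁ : ContinuousOn (fun s => s * f s) (Icc a b) := continuousOn_id.mul hf
  have hd := ((hasDerivWithinAt_id t _).mul (hf.hasDerivWithinAt_integral_of_mem_Icc ht)).sub
    (hf₁.hasDerivWithinAt_integral_of_mem_Icc ht)
  refine (hd.congr_of_mem (fun x hx => ?_) ht).congr_deriv (by simp)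
  exact integral_sub_mul_eq (hf.intervalIntegrable_of_mem_Icc hx)
    (hf₁.intervalIntegrable_of_mem_Icc hx)

theorem ContinuousOn.continuousOn_integral_sub_mul (hf : ContinuousOn f (Icc a b)) :
    ContinuousOn (fun x => ∫ s in a..x, (x - s) * f s) (Icc a b) :=
  fun _ hx => (hf.hasDerivWithinAt_integral_sub_mul hx).continuousWithinAt

theorem ContinuousOn.hasDerivWithinAt_integral_sub_sq_mul (hf : ContinuousOn f (Icc a b))
    (ht : t ∈ Icc a b) :
    HasDerivWithinAt (fun x => ∫ s in a..x, (x - s) ^ 2 * f s)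
      (2 * ∫ s in a..t, (t - s) * f s) (Icc a b) t := by
  have hf₁ : ContinuousOn (fun s => s * f s) (Icc a b) := continuousOn_id.mul hf
  have hf₂ : ContinuousOn (fun s => s ^ 2 * f s) (Icc a b) := (continuousOn_pow 2).mul hf
  have hd := ((((hasDerivWithinAt_id t _).pow 2).mul
      (hf.hasDerivWithinAt_integral_of_mem_Icc ht)).sub
    (((hasDerivWithinAt_id t _).const_mul 2).mul
      (hf₁.hasDerivWithinAt_integral_of_mem_Icc ht))).add
    (hf₂.hasDerivWithinAt_integral_of_mem_Icc ht)
  refine (hd.congr_of_mem (fun x hx => ?_) ht).congr_deriv ?_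
  · exact integral_sub_sq_mul_eq (hf.intervalIntegrable_of_mem_Icc hx)
      (hf₁.intervalIntegrable_of_mem_Icc hx) (hf₂.intervalIntegrable_of_mem_Icc hx)
  · rw [integral_sub_mul_eq (hf.intervalIntegrable_of_mem_Icc ht)
      (hf₁.intervalIntegrable_of_mem_Icc ht)]
    simp only [Nat.cast_ofNat, id_eq, Nat.add_one_sub_one, pow_one, mul_one, Pi.pow_apply]
    ring

theorem ContinuousOn.integral_integral_sub_mul (hf : ContinuousOn f (Icc a b))
    {c : ℝ} (hc : c ∈ Icc a b) :
    ∫ x in a..c, (∫ s in a..x, (x - s) * f s) = (∫ s in a..c, (c - s) ^ 2 * f s) / 2 := by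
  have hW : ∀ x ∈ Icc a b, HasDerivWithinAt (fun x => (∫ s in a..x, (x - s) ^ 2 * f s) / 2)
      (∫ s in a..x, (x - s) * f s) (Icc a b) x := fun x hx =>
    ((hf.hasDerivWithinAt_integral_sub_sq_mul hx).div_const 2).congr_deriv (by ring)
  have hsub : Icc a c ⊆ Icc a b := Icc_subset_Icc_right hc.2
  have hFTC := intervalIntegral.integral_eq_sub_of_hasDerivAt_of_le hc.1
    (fun x hx => (hW x (hsub hx)).continuousWithinAt.mono hsub)
    (fun x hx => (hW x (hsub (Ioo_subset_Icc_self hx))).hasDerivAt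
      (Icc_mem_nhds hx.1 (hx.2.trans_le hc.2)))
    (hf.continuousOn_integral_sub_mul.intervalIntegrable_of_mem_Icc hc)
  simpa using hFTC

theorem ContinuousOn.integral_affine_sub_integral_sub_mul (hf : ContinuousOn f (Icc a b))
    {c : ℝ} (hc : c ∈ Icc a b) (A B : ℝ) :
    ∫ x in a..c, (A * x + B - ∫ s in a..x, (x - s) * f s) =
      A * (c ^ 2 - a ^ 2) / 2 + B * (c - a) - (∫ s in a..c, (c - s) ^ 2 * f s) / 2 := by
  have h_lin : IntervalIntegrable (fun x => A * x) volume a c :=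
    intervalIntegral.intervalIntegrable_id.const_mul A
  rw [intervalIntegral.integral_sub (h_lin.add intervalIntegrable_const)
      (hf.continuousOn_integral_sub_mul.intervalIntegrable_of_mem_Icc hc),
    intervalIntegral.integral_add h_lin intervalIntegrable_const,
    intervalIntegral.integral_const_mul, integral_id, intervalIntegral.integral_const,
    smul_eq_mul, hf.integral_integral_sub_mul hc]
  ring

end

theorem stmt_0_general (T η α β : ℝ) (hη0 : 0 < η) (hηT : η < T)
    (hα : 0 < α)
    (hβne : β ≠ (2 * T - α * η ^ 2) / (α * η ^ 2 - 2 * η + 2 * T))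
    (D : ℝ) (hD : D = (α * η ^ 2 - 2 * T) - β * (2 * η - α * η ^ 2 - 2 * T))
    (y : ℝ → ℝ) (hy : ContinuousOn y (Set.Icc 0 T))
    (u : ℝ → ℝ)
    (hu : ∀ t : ℝ, u t =
      ((β * (2 * T - α * η ^ 2) - 2 * β * (1 - α * η) * t) / D) *
        (∫ s in (0:ℝ)..η, (η - s) * y s)
      + ((α * β * η - α * (β - 1) * t) / D) *
        (∫ s in (0:ℝ)..η, (η - s) ^ 2 * y s)
      + ((2 * (β - 1) * t - 2 * β * η) / D) *
        (∫ s in (0:ℝ)..T, (T - s) * y s)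
      - ∫ s in (0:ℝ)..t, (t - s) * y s) :
    ∃ u' u'' : ℝ → ℝ,
      (∀ t ∈ Set.Icc (0:ℝ) T, HasDerivWithinAt u (u' t) (Set.Icc 0 T) t) ∧
      (∀ t ∈ Set.Icc (0:ℝ) T, HasDerivWithinAt u' (u'' t) (Set.Icc 0 T) t) ∧
      ContinuousOn u' (Set.Icc 0 T) ∧
      ContinuousOn u'' (Set.Icc 0 T) ∧
      (∀ t ∈ Set.Ioo (0:ℝ) T, u'' t + y t = 0) ∧
      u 0 = β * u η ∧
      u T = α * ∫ s in (0:ℝ)..η, u s := by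
  have hK : 0 < α * η ^ 2 - 2 * η + 2 * T := by nlinarith
  have hD0 : D ≠ 0 := by
    rintro rfl
    exact hβne (by rw [eq_div_iff hK.ne']; linarith)
  have hη : η ∈ Icc 0 T := ⟨hη0.le, hηT.le⟩
  let V t := ∫ s in (0:ℝ)..t, (t - s) * y s
  let I₂ := ∫ s in (0:ℝ)..η, (η - s) ^ 2 * y s
  let A := (-2 * β * (1 - α * η) * V η - α * (β - 1) * I₂ + 2 * (β - 1) * V T) / D
  let B := (β * (2 * T - α * η ^ 2) * V η + α * β * η * I₂ - 2 * β * η * V T) / D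
  have hu_eq : u = fun t => A * t + B - V t := funext fun t => by rw [hu]; ring
  have hV₀ : V 0 = 0 := intervalIntegral.integral_same
  refine ⟨fun t => A - ∫ s in (0:ℝ)..t, y s, fun t => -y t, fun t ht => ?_,
    fun t ht => (hy.hasDerivWithinAt_integral_of_mem_Icc ht).const_sub A,
    continuousOn_const.sub fun t ht =>
      (hy.hasDerivWithinAt_integral_of_mem_Icc ht).continuousWithinAt,
    hy.neg, fun t _ => neg_add_cancel _, ?_, ?_⟩
  · rw [hu_eq]
    exact (((hasDerivWithinAt_id t _).const_mul A).add_const B).sub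
      (hy.hasDerivWithinAt_integral_sub_mul ht) |>.congr_deriv (by simp)
  · simp only [hu_eq, hV₀, A, B]
    field_simp
    rw [hD]
    ring
  · have h_int_u :
        ∫ s in (0:ℝ)..η, u s = A * (η ^ 2 - 0 ^ 2) / 2 + B * (η - 0) - I₂ / 2 := by
      rw [hu_eq]
      exact hy.integral_affine_sub_integral_sub_mul hη A B
    rw [h_int_u]
    simp only [hu_eq, A, B]
    field_simp
    rw [hD]
    ring

theorem stmt_0 (T η α β : ℝ) (hT : 0 < T) (hη0 : 0 < η) (hηT : η < T)
    (hα : 0 < α) (hβ : 0 ≤ β)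
    (hβne : β ≠ (2 * T - α * η ^ 2) / (α * η ^ 2 - 2 * η + 2 * T))
    (D : ℝ) (hD : D = (α * η ^ 2 - 2 * T) - β * (2 * η - α * η ^ 2 - 2 * T))
    (y : ℝ → ℝ) (hy : ContinuousOn y (Set.Icc 0 T))
    (u : ℝ → ℝ)
    (hu : ∀ t : ℝ, u t =
      ((β * (2 * T - α * η ^ 2) - 2 * β * (1 - α * η) * t) / D) *
        (∫ s in (0:ℝ)..η, (η - s) * y s)
      + ((α * β * η - α * (β - 1) * t) / D) *
        (∫ s in (0:ℝ)..η, (η - s) ^ 2 * y s)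
      + ((2 * (β - 1) * t - 2 * β * η) / D) *
        (∫ s in (0:ℝ)..T, (T - s) * y s)
      - ∫ s in (0:ℝ)..t, (t - s) * y s) :
    ∃ u' u'' : ℝ → ℝ,
      (∀ t ∈ Set.Icc (0:ℝ) T, HasDerivWithinAt u (u' t) (Set.Icc 0 T) t) ∧
      (∀ t ∈ Set.Icc (0:ℝ) T, HasDerivWithinAt u' (u'' t) (Set.Icc 0 T) t) ∧
      ContinuousOn u' (Set.Icc 0 T) ∧
      ContinuousOn u'' (Set.Icc 0 T) ∧
      (∀ t ∈ Set.Ioo (0:ℝ) T, u'' t + y t = 0) ∧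
      u 0 = β * u η ∧
      u T = α * ∫ s in (0:ℝ)..η, u s :=
  stmt_0_general T η α β hη0 hηT hα hβne D hD y hy u hu
end

section
/- Let T > 0, 0 < η < T, α > 0, β ≥ 0 be real constants with β ≠ (2T − αη²)/(αη² − 2η + 2T), and let y : [0,T] → ℝ be continuous. If u₁ and u₂ are both twice continuously differentiable functions on [0,T] satisfying u''(t) + y(t) = 0 on (0,T), u(0) = β u(η) and u(T) = α ∫₀^η u(s) ds, then u₁ = u₂ on [0,T]. -/
/-!
The difference `w = u₁ - u₂` solves the homogeneous problem: `w'' = 0` on `(0, T)`, so `w` is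
affine, `w t = c + d t`. The two boundary conditions then become a homogeneous linear system
for `(c, d)` whose determinant is `2T - αη² - β(αη² - 2η + 2T)`; since `αη² - 2η + 2T > 0`,
the hypothesis on `β` says exactly that this determinant is nonzero, so `c = d = 0`.
-/

open Set

theorem eq_of_continuousOn_Icc_of_hasDerivAt_zero {f : ℝ → ℝ} {a b : ℝ}
    (hf : ContinuousOn f (Icc a b)) (hf' : ∀ x ∈ Ioo a b, HasDerivAt f 0 x) :
    ∀ x ∈ Icc a b, f x = f a := by
  rintro x ⟨hax, hxb⟩
  rcases hax.eq_or_lt with rfl | hax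
  · rfl
  obtain ⟨c, -, hc⟩ := exists_hasDerivAt_eq_slope f (fun _ => 0) hax
    (hf.mono (Icc_subset_Icc_right hxb)) fun y hy => hf' y ⟨hy.1, hy.2.trans_le hxb⟩
  rw [eq_comm, div_eq_zero_iff, sub_eq_zero, sub_eq_zero] at hc
  exact hc.resolve_right hax.ne'

theorem eq_affine_of_second_deriv_eq_zero {w w' w'' : ℝ → ℝ} {a b : ℝ}
    (hw : ∀ t ∈ Icc a b, HasDerivWithinAt w (w' t) (Icc a b) t)
    (hw' : ∀ t ∈ Icc a b, HasDerivWithinAt w' (w'' t) (Icc a b) t)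
    (hw'' : ∀ t ∈ Ioo a b, w'' t = 0) :
    ∀ t ∈ Icc a b, w t = w a + w' a * (t - a) := by
  have hslope : ∀ t ∈ Icc a b, w' t = w' a := by
    refine eq_of_continuousOn_Icc_of_hasDerivAt_zero
      (fun t ht => (hw' t ht).continuousWithinAt) fun t ht => ?_
    rw [← hw'' t ht]
    exact (hw' t (Ioo_subset_Icc_self ht)).hasDerivAt (Icc_mem_nhds ht.1 ht.2)
  have hline : ∀ t ∈ Icc a b, HasDerivWithinAt (fun s => w s - w' a * (s - a))
      (w' t - w' a) (Icc a b) t := fun t ht => by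
    simpa using (hw t ht).fun_sub (((hasDerivWithinAt_id t _).sub_const a).const_mul (w' a))
  have hconst := eq_of_continuousOn_Icc_of_hasDerivAt_zero
    (fun t ht => (hline t ht).continuousWithinAt) fun t ht => by
      simpa [hslope t (Ioo_subset_Icc_self ht)] using
        (hline t (Ioo_subset_Icc_self ht)).hasDerivAt (Icc_mem_nhds ht.1 ht.2)
  intro t ht
  have h := hconst t ht
  rw [sub_self, mul_zero, sub_zero] at h
  linarith

theorem integral_affine (c d η : ℝ) :
    ∫ s in (0 : ℝ)..η, (c + d * s) = c * η + d * η ^ 2 / 2 := by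
  rw [intervalIntegral.integral_add intervalIntegrable_const
    ((continuous_const_mul d).intervalIntegrable _ _), intervalIntegral.integral_const_mul]
  simp only [intervalIntegral.integral_const, integral_id, smul_eq_mul]
  ring

theorem affine_coeffs_eq_zero_of_boundary {T η α β c d : ℝ}
    (hdet : 2 * T - α * η ^ 2 - β * (α * η ^ 2 - 2 * η + 2 * T) ≠ 0)
    (h₀ : c = β * (c + d * η)) (hT : c + d * T = α * (c * η + d * η ^ 2 / 2)) :
    c = 0 ∧ d = 0 := by
  -- The coefficients are the rows of the adjugate of the system (after clearing the `/ 2`).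
  constructor
  · refine (mul_eq_zero.1 ?_).resolve_right hdet
    linear_combination (2 * T - α * η ^ 2) * h₀ + 2 * β * η * hT
  · refine (mul_eq_zero.1 ?_).resolve_right hdet
    linear_combination (2 * α * η - 2) * h₀ + (2 - 2 * β) * hT

theorem eq_zero_of_homogeneous_bvp {T η α β : ℝ} {w w' w'' : ℝ → ℝ}
    (hη0 : 0 ≤ η) (hηT : η ≤ T)
    (hdet : 2 * T - α * η ^ 2 - β * (α * η ^ 2 - 2 * η + 2 * T) ≠ 0)
    (hw : ∀ t ∈ Icc 0 T, HasDerivWithinAt w (w' t) (Icc 0 T) t)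
    (hw' : ∀ t ∈ Icc 0 T, HasDerivWithinAt w' (w'' t) (Icc 0 T) t)
    (hode : ∀ t ∈ Ioo 0 T, w'' t = 0)
    (hbc₀ : w 0 = β * w η) (hbcT : w T = α * ∫ s in (0 : ℝ)..η, w s) :
    ∀ t ∈ Icc 0 T, w t = 0 := by
  have haff : ∀ t ∈ Icc 0 T, w t = w 0 + w' 0 * t := by
    simpa using eq_affine_of_second_deriv_eq_zero hw hw' hode
  have hint : ∫ s in (0 : ℝ)..η, w s = w 0 * η + w' 0 * η ^ 2 / 2 := by
    rw [← integral_affine]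
    refine intervalIntegral.integral_congr fun s hs => haff s ?_
    rw [uIcc_of_le hη0] at hs
    exact ⟨hs.1, hs.2.trans hηT⟩
  obtain ⟨hc, hd⟩ := affine_coeffs_eq_zero_of_boundary hdet
    (by rwa [haff η ⟨hη0, hηT⟩] at hbc₀)
    (by rwa [hint, haff T ⟨hη0.trans hηT, le_rfl⟩] at hbcT)
  intro t ht
  rw [haff t ht, hc, hd]
  ring

theorem stmt_1_general (T η α β : ℝ) (hη0 : 0 < η) (hηT : η < T)
    (hα : 0 < α)
    (hβne : β ≠ (2 * T - α * η ^ 2) / (α * η ^ 2 - 2 * η + 2 * T))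
    (y : ℝ → ℝ)
    (u₁ u₂ u₁' u₂' u₁'' u₂'' : ℝ → ℝ)
    (h₁d1 : ∀ t ∈ Set.Icc (0:ℝ) T, HasDerivWithinAt u₁ (u₁' t) (Set.Icc 0 T) t)
    (h₁d2 : ∀ t ∈ Set.Icc (0:ℝ) T, HasDerivWithinAt u₁' (u₁'' t) (Set.Icc 0 T) t)
    (h₁ode : ∀ t ∈ Set.Ioo (0:ℝ) T, u₁'' t + y t = 0)
    (h₁bc1 : u₁ 0 = β * u₁ η)
    (h₁bc2 : u₁ T = α * ∫ s in (0:ℝ)..η, u₁ s)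
    (h₂d1 : ∀ t ∈ Set.Icc (0:ℝ) T, HasDerivWithinAt u₂ (u₂' t) (Set.Icc 0 T) t)
    (h₂d2 : ∀ t ∈ Set.Icc (0:ℝ) T, HasDerivWithinAt u₂' (u₂'' t) (Set.Icc 0 T) t)
    (h₂ode : ∀ t ∈ Set.Ioo (0:ℝ) T, u₂'' t + y t = 0)
    (h₂bc1 : u₂ 0 = β * u₂ η)
    (h₂bc2 : u₂ T = α * ∫ s in (0:ℝ)..η, u₂ s) :
    ∀ t ∈ Set.Icc (0:ℝ) T, u₁ t = u₂ t := by
  have hden : 0 < α * η ^ 2 - 2 * η + 2 * T := by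
    linarith [mul_pos hα (pow_pos hη0 2)]
  have hdet : 2 * T - α * η ^ 2 - β * (α * η ^ 2 - 2 * η + 2 * T) ≠ 0 := fun h =>
    hβne (by rw [eq_div_iff hden.ne']; linarith)
  have hsub : uIcc 0 η ⊆ Icc 0 T := by
    rw [uIcc_of_le hη0.le]
    exact Icc_subset_Icc_right hηT.le
  have hint : ∀ u u' : ℝ → ℝ, (∀ t ∈ Icc 0 T, HasDerivWithinAt u (u' t) (Icc 0 T) t) →
      IntervalIntegrable u MeasureTheory.volume 0 η := fun u u' hu =>
    ContinuousOn.intervalIntegrable fun t ht => ((hu t (hsub ht)).continuousWithinAt).mono hsub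
  have hzero := eq_zero_of_homogeneous_bvp hη0.le hηT.le hdet
    (fun t ht => (h₁d1 t ht).fun_sub (h₂d1 t ht)) (fun t ht => (h₁d2 t ht).fun_sub (h₂d2 t ht))
    (fun t ht => by linarith [h₁ode t ht, h₂ode t ht])
    (by rw [h₁bc1, h₂bc1]; ring)
    (by rw [intervalIntegral.integral_sub (hint _ _ h₁d1) (hint _ _ h₂d1), h₁bc2, h₂bc2]; ring)
  exact fun t ht => sub_eq_zero.1 (hzero t ht)

theorem stmt_1 (T η α β : ℝ) (hT : 0 < T) (hη0 : 0 < η) (hηT : η < T)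
    (hα : 0 < α) (hβ : 0 ≤ β)
    (hβne : β ≠ (2 * T - α * η ^ 2) / (α * η ^ 2 - 2 * η + 2 * T))
    (y : ℝ → ℝ) (hy : ContinuousOn y (Set.Icc 0 T))
    (u₁ u₂ u₁' u₂' u₁'' u₂'' : ℝ → ℝ)
    (h₁d1 : ∀ t ∈ Set.Icc (0:ℝ) T, HasDerivWithinAt u₁ (u₁' t) (Set.Icc 0 T) t)
    (h₁d2 : ∀ t ∈ Set.Icc (0:ℝ) T, HasDerivWithinAt u₁' (u₁'' t) (Set.Icc 0 T) t)
    (h₁c : ContinuousOn u₁'' (Set.Icc 0 T))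
    (h₁ode : ∀ t ∈ Set.Ioo (0:ℝ) T, u₁'' t + y t = 0)
    (h₁bc1 : u₁ 0 = β * u₁ η)
    (h₁bc2 : u₁ T = α * ∫ s in (0:ℝ)..η, u₁ s)
    (h₂d1 : ∀ t ∈ Set.Icc (0:ℝ) T, HasDerivWithinAt u₂ (u₂' t) (Set.Icc 0 T) t)
    (h₂d2 : ∀ t ∈ Set.Icc (0:ℝ) T, HasDerivWithinAt u₂' (u₂'' t) (Set.Icc 0 T) t)
    (h₂c : ContinuousOn u₂'' (Set.Icc 0 T))
    (h₂ode : ∀ t ∈ Set.Ioo (0:ℝ) T, u₂'' t + y t = 0)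
    (h₂bc1 : u₂ 0 = β * u₂ η)
    (h₂bc2 : u₂ T = α * ∫ s in (0:ℝ)..η, u₂ s) :
    ∀ t ∈ Set.Icc (0:ℝ) T, u₁ t = u₂ t :=
  stmt_1_general T η α β hη0 hηT hα hβne y u₁ u₂ u₁' u₂' u₁'' u₂'' h₁d1 h₁d2 h₁ode h₁bc1 h₁bc2 h₂d1
    h₂d2 h₂ode h₂bc1 h₂bc2
end

section
/- Let T > 0 and 0 < η < T, and suppose 0 < α < 2T/η² and 0 ≤ β < (2T − αη²)/(αη² − 2η + 2T). If y : [0,T] → [0,∞) is continuous and u is a twice continuously differentiable function on [0,T] satisfying u''(t) + y(t) = 0 on (0,T), u(0) = β u(η) and u(T) = α ∫₀^η u(s) ds, then u(t) ≥ 0 for all t ∈ [0,T]. -/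
/-! Since `u'' = -y ≤ 0`, the solution `u` is concave, so it lies above its secant
`((T - t) u(0) + t u(T)) / T`. Inserting this bound into the two boundary conditions gives two
linear inequalities for the endpoint values `u(0)` and `u(T)`; the bounds on `α` and `β` make
them force `u(0) ≥ 0` and `u(T) ≥ 0`. A concave function is at least the
minimum of its endpoint values, hence `u ≥ 0`. -/

open Set

lemma concaveOn_Icc_of_hasDerivWithinAt2_nonpos {f f' f'' : ℝ → ℝ} {a b : ℝ}
    (hf' : ∀ x ∈ Icc a b, HasDerivWithinAt f (f' x) (Icc a b) x)
    (hf'' : ∀ x ∈ Ioo a b, HasDerivWithinAt f' (f'' x) (Icc a b) x)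
    (hf''₀ : ∀ x ∈ Ioo a b, f'' x ≤ 0) : ConcaveOn ℝ (Icc a b) f := by
  refine concaveOn_of_hasDerivWithinAt2_nonpos (f' := f') (f'' := f'') (convex_Icc a b)
    (fun x hx ↦ (hf' x hx).continuousWithinAt) ?_ ?_ ?_ <;> rw [interior_Icc]
  · exact fun x hx ↦ (hf' x (Ioo_subset_Icc_self hx)).mono Ioo_subset_Icc_self
  · exact fun x hx ↦ (hf'' x hx).mono Ioo_subset_Icc_self
  · exact hf''₀

lemma ConcaveOn.secant_le {f : ℝ → ℝ} {a b t : ℝ} (hf : ConcaveOn ℝ (Icc a b) f) (hab : a < b)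
    (ht : t ∈ Icc a b) : ((b - t) * f a + (t - a) * f b) / (b - a) ≤ f t := by
  have hba : b - a ≠ 0 := (sub_pos.2 hab).ne'
  have key := hf.2 (left_mem_Icc.2 hab.le) (right_mem_Icc.2 hab.le)
    (div_nonneg (sub_nonneg.2 ht.2) (sub_pos.2 hab).le)
    (div_nonneg (sub_nonneg.2 ht.1) (sub_pos.2 hab).le) (by field_simp; ring)
  have hpt : ((b - t) / (b - a)) • a + ((t - a) / (b - a)) • b = t := by
    simp only [smul_eq_mul]; field_simp; ring
  rw [hpt, smul_eq_mul, smul_eq_mul] at key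
  calc ((b - t) * f a + (t - a) * f b) / (b - a)
      = (b - t) / (b - a) * f a + (t - a) / (b - a) * f b := by field_simp
    _ ≤ f t := key

lemma integral_secant (T η p q : ℝ) :
    ∫ s in (0:ℝ)..η, ((T - s) * p + s * q) / T =
      ((2 * T * η - η ^ 2) * p + η ^ 2 * q) / (2 * T) := by
  have hlin : (fun s ↦ (T - s) * p + s * q) = fun s ↦ T * p + (q - p) * s := by ext; ring
  rw [intervalIntegral.integral_div, hlin, intervalIntegral.integral_add intervalIntegrable_const
    ((continuous_const_mul _).intervalIntegrable _ _), intervalIntegral.integral_const,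
    intervalIntegral.integral_const_mul, integral_id, smul_eq_mul]
  ring

lemma nonneg_of_secant_boundary_ineqs {T η α β p q : ℝ} (hT : 0 < T) (hη0 : 0 < η)
    (hηT : η < T) (hα : 0 < α) (hα2 : α * η ^ 2 < 2 * T) (hβ : 0 ≤ β)
    (hβ2 : β * (α * η ^ 2 - 2 * η + 2 * T) < 2 * T - α * η ^ 2)
    (hq : α * (((2 * T * η - η ^ 2) * p + η ^ 2 * q) / (2 * T)) ≤ q)
    (hp : β * (((T - η) * p + η * q) / T) ≤ p) : 0 ≤ p ∧ 0 ≤ q := by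
  have hc : 0 < 2 * T - α * η ^ 2 := sub_pos.2 hα2
  have hq' : α * η * (2 * T - η) * p ≤ (2 * T - α * η ^ 2) * q := by
    rw [mul_div_assoc', div_le_iff₀ (by positivity)] at hq; linarith
  have hp' : β * η * q ≤ (T - β * (T - η)) * p := by
    rw [mul_div_assoc', div_le_iff₀ hT] at hp; linarith
  have hp0 : 0 ≤ p := by
    -- eliminating `q` between `hq'` and `hp'` leaves this multiple of `p`
    have key : 0 ≤ T * ((2 * T - α * η ^ 2) - β * (α * η ^ 2 - 2 * η + 2 * T)) * p := by
      nlinarith [mul_le_mul_of_nonneg_left hq' (mul_nonneg hβ hη0.le),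
        mul_le_mul_of_nonneg_left hp' hc.le]
    exact (mul_nonneg_iff_of_pos_left (mul_pos hT (by linarith))).1 key
  refine ⟨hp0, (mul_nonneg_iff_of_pos_left hc).1 (le_trans ?_ hq')⟩
  exact mul_nonneg (mul_nonneg (mul_nonneg hα.le hη0.le) (by linarith)) hp0

theorem stmt_2_general (T η α β : ℝ) (hT : 0 < T) (hη0 : 0 < η) (hηT : η < T)
    (hα : 0 < α) (hα2 : α < 2 * T / η ^ 2)
    (hβ : 0 ≤ β) (hβ2 : β < (2 * T - α * η ^ 2) / (α * η ^ 2 - 2 * η + 2 * T))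
    (y : ℝ → ℝ)
    (hynn : ∀ t ∈ Set.Icc (0:ℝ) T, 0 ≤ y t)
    (u u' u'' : ℝ → ℝ)
    (hd1 : ∀ t ∈ Set.Icc (0:ℝ) T, HasDerivWithinAt u (u' t) (Set.Icc 0 T) t)
    (hd2 : ∀ t ∈ Set.Icc (0:ℝ) T, HasDerivWithinAt u' (u'' t) (Set.Icc 0 T) t)
    (hode : ∀ t ∈ Set.Ioo (0:ℝ) T, u'' t + y t = 0)
    (hbc1 : u 0 = β * u η)
    (hbc2 : u T = α * ∫ s in (0:ℝ)..η, u s) :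
    ∀ t ∈ Set.Icc (0:ℝ) T, 0 ≤ u t := by
  have hconc : ConcaveOn ℝ (Icc 0 T) u :=
    concaveOn_Icc_of_hasDerivWithinAt2_nonpos hd1 (fun t ht ↦ hd2 t (Ioo_subset_Icc_self ht))
      fun t ht ↦ by linarith [hode t ht, hynn t (Ioo_subset_Icc_self ht)]
  have hsecant : ∀ t ∈ Icc 0 T, ((T - t) * u 0 + t * u T) / T ≤ u t := fun t ht ↦ by
    simpa only [sub_zero] using hconc.secant_le hT ht
  have hcont : ContinuousOn u (Icc 0 T) := fun t ht ↦ (hd1 t ht).continuousWithinAt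
  have hint : ∫ s in (0:ℝ)..η, ((T - s) * u 0 + s * u T) / T ≤ ∫ s in (0:ℝ)..η, u s :=
    intervalIntegral.integral_mono_on hη0.le (Continuous.intervalIntegrable (by fun_prop) _ _)
      ((hcont.mono (Icc_subset_Icc_right hηT.le)).intervalIntegrable_of_Icc hη0.le)
      fun s hs ↦ hsecant s ⟨hs.1, hs.2.trans hηT.le⟩
  obtain ⟨hu0, huT⟩ := nonneg_of_secant_boundary_ineqs hT hη0 hηT hα
    (by rwa [lt_div_iff₀ (by positivity)] at hα2)
    hβ (by rwa [lt_div_iff₀ (by nlinarith)] at hβ2)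
    (by rw [← integral_secant]; exact (mul_le_mul_of_nonneg_left hint hα.le).trans_eq hbc2.symm)
    ((mul_le_mul_of_nonneg_left (hsecant η ⟨hη0.le, hηT.le⟩) hβ).trans_eq hbc1.symm)
  intro t ht
  have hseg : t ∈ segment ℝ 0 T := by rwa [segment_eq_Icc hT.le]
  exact (le_min hu0 huT).trans
    (hconc.ge_on_segment (left_mem_Icc.2 hT.le) (right_mem_Icc.2 hT.le) hseg)

theorem stmt_2 (T η α β : ℝ) (hT : 0 < T) (hη0 : 0 < η) (hηT : η < T)
    (hα : 0 < α) (hα2 : α < 2 * T / η ^ 2)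
    (hβ : 0 ≤ β) (hβ2 : β < (2 * T - α * η ^ 2) / (α * η ^ 2 - 2 * η + 2 * T))
    (y : ℝ → ℝ) (hy : ContinuousOn y (Set.Icc 0 T))
    (hynn : ∀ t ∈ Set.Icc (0:ℝ) T, 0 ≤ y t)
    (u u' u'' : ℝ → ℝ)
    (hd1 : ∀ t ∈ Set.Icc (0:ℝ) T, HasDerivWithinAt u (u' t) (Set.Icc 0 T) t)
    (hd2 : ∀ t ∈ Set.Icc (0:ℝ) T, HasDerivWithinAt u' (u'' t) (Set.Icc 0 T) t)
    (hc : ContinuousOn u'' (Set.Icc 0 T))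
    (hode : ∀ t ∈ Set.Ioo (0:ℝ) T, u'' t + y t = 0)
    (hbc1 : u 0 = β * u η)
    (hbc2 : u T = α * ∫ s in (0:ℝ)..η, u s) :
    ∀ t ∈ Set.Icc (0:ℝ) T, 0 ≤ u t :=
  stmt_2_general T η α β hT hη0 hηT hα hα2 hβ hβ2 y hynn u u' u'' hd1 hd2 hode hbc1 hbc2
end

section
/- Let T > 0, 0 < η < T, 0 < α < 2T/η², 0 ≤ β < (2T − αη²)/(αη² − 2η + 2T), and set D = (αη² − 2T) − β(2η − αη² − 2T) and γ = min{ η/T, α(β+1)η²/(2T), α(β+1)η(T−η)/(2T − α(β+1)η²) }. Let f : [0,∞) → [0,∞) and a : [0,T] → [0,∞) be continuous. Define for each continuous u : [0,T] → [0,∞) the function (Au)(t) = ((β(2T − αη²) − 2β(1 − αη)t)/D) ∫₀^η (η − s) a(s) f(u(s)) ds + ((αβη − α(β − 1)t)/D) ∫₀^η (η − s)² a(s) f(u(s)) ds + ((2(β − 1)t − 2βη)/D) ∫₀^T (T − s) a(s) f(u(s)) ds − ∫₀^t (t − s) a(s) f(u(s)) ds. Then for every continuous u : [0,T] → [0,∞)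 with min_{t ∈ [η,T]} u(t) ≥ γ ‖u‖, the function Au satisfies Au(t) ≥ 0 for all t ∈ [0,T] and min_{t ∈ [η,T]} (Au)(t) ≥ γ ‖Au‖, where ‖v‖ = max_{t ∈ [0,T]} |v(t)|. -/
/-!
`A u` solves `v'' = -a f(u) ≤ 0` with `v 0 = β v η` and `v T = α ∫₀^η v`, so it is concave.
Concavity bounds `∫₀^η v` below by the trapezoid `η (v 0 + v η) / 2`, and the two boundary
conditions turn this into `k v η ≤ v T` with `k = α η (β + 1) / 2`. The chord through `0, η, T`
then forces `v η ≥ 0` thanks to the upper bound on `β`, whence `v ≥ 0` on `[0, T]`.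
Finally, for any `w`, comparing `v w` with the chords through `η` and `T` gives
`γ v w ≤ min (v η) (v T)`, and that minimum is the minimum of the concave `v` on `[η, T]`.
-/

open Set

theorem ConcaveOn.chord_le {f : ℝ → ℝ} {s : Set ℝ} (hf : ConcaveOn ℝ s f) {x y z : ℝ}
    (hx : x ∈ s) (hz : z ∈ s) (hxy : x ≤ y) (hyz : y ≤ z) :
    (z - y) * f x + (y - x) * f z ≤ (z - x) * f y := by
  rcases hxy.eq_or_lt with rfl | hxy
  · simp
  rcases hyz.eq_or_lt with rfl | hyz
  · simp
  have h := hf.neg.secant_mono_aux1 hx hz hxy hyz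
  simp only [Pi.neg_apply] at h
  linarith

theorem ConcaveOn.trapezoid_le_integral {f : ℝ → ℝ} {a b : ℝ} (hab : a ≤ b)
    (hf : ConcaveOn ℝ (Icc a b) f) (hfc : ContinuousOn f (Icc a b)) :
    (b - a) * (f a + f b) / 2 ≤ ∫ x in a..b, f x := by
  have hchord : ∫ x in a..b, ((b - x) * f a + (x - a) * f b) ≤ ∫ x in a..b, (b - a) * f x :=
    intervalIntegral.integral_mono_on hab (Continuous.intervalIntegrable (by fun_prop) _ _)
      ((hfc.intervalIntegrable_of_Icc hab).const_mul _)
      fun x hx => hf.chord_le (left_mem_Icc.2 hab) (right_mem_Icc.2 hab) hx.1 hx.2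
  have hlin : ∫ x in a..b, ((b - x) * f a + (x - a) * f b) = (b - a) ^ 2 / 2 * (f a + f b) := by
    rw [intervalIntegral.integral_add (Continuous.intervalIntegrable (by fun_prop) _ _)
        (Continuous.intervalIntegrable (by fun_prop) _ _),
      intervalIntegral.integral_mul_const, intervalIntegral.integral_mul_const,
      intervalIntegral.integral_comp_sub_left (fun x => x),
      intervalIntegral.integral_comp_sub_right (fun x => x)]
    simp only [sub_self, integral_id, ne_eq, OfNat.ofNat_ne_zero, not_false_eq_true, zero_pow,
      sub_zero]
    ring
  rw [hlin, intervalIntegral.integral_const_mul] at hchord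
  rcases hab.eq_or_lt with rfl | hab
  · simp
  have hba : 0 < b - a := sub_pos.2 hab
  nlinarith

theorem ContinuousOn.exists_continuous_nonneg_eqOn_Icc {g : ℝ → ℝ} {a b : ℝ} (hab : a ≤ b)
    (hg : ContinuousOn g (Icc a b)) (hg0 : ∀ x ∈ Icc a b, 0 ≤ g x) :
    ∃ G : ℝ → ℝ, Continuous G ∧ (∀ x, 0 ≤ G x) ∧ EqOn G g (Icc a b) :=
  ⟨fun x => g (projIcc a b hab x),
    hg.comp_continuous (continuous_subtype_val.comp continuous_projIcc)
      fun x => (projIcc a b hab x).2,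
    fun x => hg0 _ (projIcc a b hab x).2, fun x hx => by simp [projIcc_of_mem hab hx]⟩

section RepeatedIntegral

variable {G : ℝ → ℝ}

theorem integral_sub_mul_eq_s9 (hG : Continuous G) (t : ℝ) :
    ∫ s in 0..t, (t - s) * G s = t * (∫ s in 0..t, G s) - ∫ s in 0..t, s * G s := by
  simp_rw [sub_mul]
  rw [intervalIntegral.integral_sub (Continuous.intervalIntegrable (by fun_prop) _ _)
    (Continuous.intervalIntegrable (by fun_prop) _ _), intervalIntegral.integral_const_mul]

theorem integral_sub_sq_mul_eq_s9 (hG : Continuous G) (t : ℝ) :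
    ∫ s in 0..t, (t - s) ^ 2 * G s =
      t ^ 2 * (∫ s in 0..t, G s) - 2 * t * (∫ s in 0..t, s * G s) + ∫ s in 0..t, s ^ 2 * G s := by
  have hexp : ∀ s, (t - s) ^ 2 * G s = t ^ 2 * G s - 2 * t * (s * G s) + s ^ 2 * G s :=
    fun s => by ring
  simp_rw [hexp]
  rw [intervalIntegral.integral_add (Continuous.intervalIntegrable (by fun_prop) _ _)
      (Continuous.intervalIntegrable (by fun_prop) _ _),
    intervalIntegral.integral_sub (Continuous.intervalIntegrable (by fun_prop) _ _)
      (Continuous.intervalIntegrable (by fun_prop) _ _),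
    intervalIntegral.integral_const_mul, intervalIntegral.integral_const_mul]

theorem hasDerivAt_integral_mul (hG : Continuous G) {φ : ℝ → ℝ} (hφ : Continuous φ) (t : ℝ) :
    HasDerivAt (fun t => ∫ s in 0..t, φ s * G s) (φ t * G t) t :=
  ((hφ.mul hG).integral_hasStrictDerivAt 0 t).hasDerivAt

theorem hasDerivAt_integral_sub_mul (hG : Continuous G) (t : ℝ) :
    HasDerivAt (fun t => ∫ s in 0..t, (t - s) * G s) (∫ s in 0..t, G s) t := by
  simp_rw [integral_sub_mul_eq_s9 hG]
  refine (((hasDerivAt_id' t).mul (hG.integral_hasStrictDerivAt 0 t).hasDerivAt).sub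
    (hasDerivAt_integral_mul hG continuous_id' t)).congr_deriv ?_
  ring

theorem hasDerivAt_integral_sub_sq_mul (hG : Continuous G) (t : ℝ) :
    HasDerivAt (fun t => ∫ s in 0..t, (t - s) ^ 2 * G s) (2 * ∫ s in 0..t, (t - s) * G s) t := by
  simp_rw [integral_sub_sq_mul_eq_s9 hG, integral_sub_mul_eq_s9 hG]
  refine ((((hasDerivAt_pow 2 t).mul (hG.integral_hasStrictDerivAt 0 t).hasDerivAt).sub
    (((hasDerivAt_id' t).const_mul 2).mul (hasDerivAt_integral_mul hG continuous_id' t))).add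
    (hasDerivAt_integral_mul hG (continuous_pow 2) t)).congr_deriv ?_
  push_cast
  ring

theorem continuous_integral_sub_mul (hG : Continuous G) :
    Continuous fun t => ∫ s in 0..t, (t - s) * G s :=
  continuous_iff_continuousAt.2 fun t => (hasDerivAt_integral_sub_mul hG t).continuousAt

theorem integral_integral_sub_mul (hG : Continuous G) (x : ℝ) :
    ∫ t in 0..x, (∫ s in 0..t, (t - s) * G s) = (∫ s in 0..x, (x - s) ^ 2 * G s) / 2 := by
  rw [intervalIntegral.integral_eq_sub_of_hasDerivAt
    (f := fun t => (∫ s in 0..t, (t - s) ^ 2 * G s) / 2)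
    (fun t _ => by simpa using (hasDerivAt_integral_sub_sq_mul hG t).div_const 2)
    ((continuous_integral_sub_mul hG).intervalIntegrable _ _)]
  simp

theorem convexOn_integral_sub_mul (hG : Continuous G) (hG0 : ∀ s, 0 ≤ G s) :
    ConvexOn ℝ univ fun t => ∫ s in 0..t, (t - s) * G s := by
  refine Monotone.convexOn_univ_of_deriv
    (fun t => (hasDerivAt_integral_sub_mul hG t).differentiableAt) ?_
  rw [funext fun t => (hasDerivAt_integral_sub_mul hG t).deriv]
  exact monotone_of_deriv_nonneg
    (fun t => (hG.integral_hasStrictDerivAt 0 t).hasDerivAt.differentiableAt)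
    (fun t => (hG.integral_hasStrictDerivAt 0 t).hasDerivAt.deriv ▸ hG0 t)

end RepeatedIntegral

section BoundaryValueProblem

/- The paper's operator is `(A u) t = bvpSolution T η α β (fun s => a s * f (u s)) t`, with the
affine part of its formula regrouped as `bvpIntercept + bvpSlope * t`; `bvpDenom` is its `D`. -/

variable {T η α β : ℝ} {y : ℝ → ℝ}

noncomputable def bvpDenom (T η α β : ℝ) : ℝ :=
  (α * η ^ 2 - 2 * T) - β * (2 * η - α * η ^ 2 - 2 * T)

noncomputable def bvpIntercept (T η α β : ℝ) (y : ℝ → ℝ) : ℝ :=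
  (β * (2 * T - α * η ^ 2) * (∫ s in 0..η, (η - s) * y s)
      + α * β * η * (∫ s in 0..η, (η - s) ^ 2 * y s)
      - 2 * β * η * ∫ s in 0..T, (T - s) * y s) / bvpDenom T η α β

noncomputable def bvpSlope (T η α β : ℝ) (y : ℝ → ℝ) : ℝ :=
  (-(2 * β * (1 - α * η)) * (∫ s in 0..η, (η - s) * y s)
      - α * (β - 1) * (∫ s in 0..η, (η - s) ^ 2 * y s)
      + 2 * (β - 1) * ∫ s in 0..T, (T - s) * y s) / bvpDenom T η α β

noncomputable def bvpSolution (T η α β : ℝ) (y : ℝ → ℝ) (t : ℝ) : ℝ :=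
  bvpIntercept T η α β y + bvpSlope T η α β y * t - ∫ s in 0..t, (t - s) * y s

theorem bvpSolution_eqOn {z : ℝ → ℝ} (hyz : EqOn y z (Icc 0 T)) (hη : η ∈ Icc 0 T) :
    EqOn (bvpSolution T η α β y) (bvpSolution T η α β z) (Icc 0 T) := by
  have hint : ∀ x ∈ Icc 0 T, ∀ φ : ℝ → ℝ, ∫ s in 0..x, φ s * y s = ∫ s in 0..x, φ s * z s :=
    fun x hx φ => intervalIntegral.integral_congr fun s hs => by
      rw [uIcc_of_le hx.1] at hs
      rw [hyz ⟨hs.1, hs.2.trans hx.2⟩]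
  intro t ht
  simp only [bvpSolution, bvpIntercept, bvpSlope, hint η hη,
    hint T (right_mem_Icc.2 (hη.1.trans hη.2)), hint t ht]

theorem continuous_bvpSolution (hy : Continuous y) : Continuous (bvpSolution T η α β y) :=
  (continuous_const.add (continuous_const.mul continuous_id)).sub (continuous_integral_sub_mul hy)

theorem concaveOn_bvpSolution (hy : Continuous y) (hy0 : ∀ s, 0 ≤ y s) :
    ConcaveOn ℝ univ (bvpSolution T η α β y) :=
  (((LinearMap.mul ℝ ℝ (bvpSlope T η α β y)).concaveOn convex_univ).add_const
    (bvpIntercept T η α β y)).sub (convexOn_integral_sub_mul hy hy0) |>.congr fun t _ => by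
      simp only [bvpSolution, Pi.sub_apply, Pi.add_apply, LinearMap.mul_apply']
      ring

theorem bvpSolution_zero (hD : bvpDenom T η α β ≠ 0) :
    bvpSolution T η α β y 0 = β * bvpSolution T η α β y η := by
  simp only [bvpSolution, bvpIntercept, bvpSlope, intervalIntegral.integral_same]
  field_simp
  unfold bvpDenom
  ring

theorem bvpSolution_right (hy : Continuous y) (hD : bvpDenom T η α β ≠ 0) :
    bvpSolution T η α β y T = α * ∫ t in 0..η, bvpSolution T η α β y t := by
  have hint : ∫ t in 0..η, bvpSolution T η α β y t = η * bvpIntercept T η α β y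
      + bvpSlope T η α β y * (η ^ 2 / 2) - (∫ s in 0..η, (η - s) ^ 2 * y s) / 2 := by
    simp only [bvpSolution]
    rw [intervalIntegral.integral_sub (Continuous.intervalIntegrable (by fun_prop) _ _)
        ((continuous_integral_sub_mul hy).intervalIntegrable _ _),
      integral_integral_sub_mul hy, intervalIntegral.integral_add intervalIntegrable_const
        (Continuous.intervalIntegrable (by fun_prop) _ _), intervalIntegral.integral_const_mul]
    simp
  rw [hint]
  simp only [bvpSolution, bvpIntercept, bvpSlope]
  field_simp
  unfold bvpDenom
  ring

end BoundaryValueProblem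

section ConcaveBoundary

variable {v : ℝ → ℝ} {T η α β k : ℝ}

theorem ConcaveOn.mul_le_of_integral_boundary (hη : 0 ≤ η) (hα : 0 ≤ α)
    (hv : ConcaveOn ℝ (Icc 0 η) v) (hvc : ContinuousOn v (Icc 0 η))
    (hbc₁ : v 0 = β * v η) (hbc₂ : v T = α * ∫ t in 0..η, v t) :
    α * η * (β + 1) / 2 * v η ≤ v T := by
  have htrap := hv.trapezoid_le_integral hη hvc
  rw [hbc₁] at htrap
  rw [hbc₂]
  calc α * η * (β + 1) / 2 * v η = α * ((η - 0) * (β * v η + v η) / 2) := by ring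
    _ ≤ α * ∫ t in 0..η, v t := mul_le_mul_of_nonneg_left htrap hα

theorem ConcaveOn.nonneg_of_boundary (hv : ConcaveOn ℝ (Icc 0 T) v) (hη0 : 0 ≤ η)
    (hηT : η ≤ T) (hβ : 0 ≤ β) (hk : 0 ≤ k) (hbc₁ : v 0 = β * v η) (hkv : k * v η ≤ v T)
    (hkβ : k * η < T - (T - η) * β) : ∀ t ∈ Icc 0 T, 0 ≤ v t := by
  have h0 : (0 : ℝ) ∈ Icc 0 T := left_mem_Icc.2 (hη0.trans hηT)
  have hT : T ∈ Icc 0 T := right_mem_Icc.2 (hη0.trans hηT)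
  have hchord := hv.chord_le h0 hT hη0 hηT
  rw [hbc₁] at hchord
  have hvη : 0 ≤ v η := by
    refine nonneg_of_mul_nonneg_right (a := T - (T - η) * β - k * η) ?_ (by linarith)
    nlinarith [mul_le_mul_of_nonneg_left hkv hη0]
  have hvT : 0 ≤ v T := (mul_nonneg hk hvη).trans hkv
  have hv0 : 0 ≤ v 0 := hbc₁ ▸ mul_nonneg hβ hvη
  exact fun t ht => (le_min hv0 hvT).trans (hv.min_le_of_mem_Icc h0 hT ht)

/- The paper's `γ` is `coneConstant T η (α * η * (β + 1) / 2)`. -/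
noncomputable def coneConstant (T η k : ℝ) : ℝ :=
  min (η / T) (min (k * η / T) (k * (T - η) / (T - k * η)))

theorem coneConstant_nonneg (hη0 : 0 < η) (hηT : η < T) (hk : 0 ≤ k) (hkη : k * η < T) :
    0 ≤ coneConstant T η k :=
  have hT : 0 < T := hη0.trans hηT
  le_min (by positivity) (le_min (by positivity)
    (div_nonneg (mul_nonneg hk (by linarith)) (by linarith)))

theorem ConcaveOn.coneConstant_mul_le_min (hv : ConcaveOn ℝ (Icc 0 T) v)
    (hvnn : ∀ t ∈ Icc 0 T, 0 ≤ v t) {w : ℝ} (hw : w ∈ Icc 0 T)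
    (hη0 : 0 < η) (hηT : η < T) (hk : 0 ≤ k) (hkη : k * η < T) (hkv : k * v η ≤ v T) :
    coneConstant T η k * v w ≤ min (v η) (v T) := by
  have hγ0 := coneConstant_nonneg hη0 hηT hk hkη
  set γ := coneConstant T η k
  have hT : 0 < T := hη0.trans hηT
  have hγ₁ : γ * T ≤ η := (le_div_iff₀ hT).1 (min_le_left _ _)
  have hγ₂ : γ * T ≤ k * η := (le_div_iff₀ hT).1 ((min_le_right _ _).trans (min_le_left _ _))
  have hγ₃ : γ * (T - k * η) ≤ k * (T - η) :=
    (le_div_iff₀ (by linarith)).1 ((min_le_right _ _).trans (min_le_right _ _))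
  have hvw := hvnn w hw
  have hvη := hvnn η ⟨hη0.le, hηT.le⟩
  have hvT := hvnn T (right_mem_Icc.2 hT.le)
  rw [le_min_iff]
  rcases le_or_gt η w with hηw | hwη
  · -- the chord from `0` to `w`, with `v 0 ≥ 0`
    have hchord := hv.chord_le (left_mem_Icc.2 hT.le) hw hη0.le hηw
    have hstar : η * v w ≤ T * v η := by nlinarith [hvnn 0 (left_mem_Icc.2 hT.le), hw.2]
    constructor
    · refine le_of_mul_le_mul_left ?_ hT
      nlinarith
    · refine le_of_mul_le_mul_left ?_ hT
      nlinarith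
  · -- the chord from `w` to `T`, with `v T` replaced by its lower bound `k v η`
    have hchord := hv.chord_le hw (right_mem_Icc.2 hT.le) hwη.le hηT.le
    have hQ : (T - η) * v w ≤ (T - w - k * (η - w)) * v η := by
      nlinarith [mul_le_mul_of_nonneg_left hkv (sub_nonneg.2 hwη.le)]
    have hQpos : 0 < T - w - k * (η - w) := by nlinarith [hw.1]
    rcases le_or_gt k 1 with hk1 | hk1
    · have hγQ : γ * (T - w - k * (η - w)) ≤ k * (T - η) := by
        nlinarith [mul_nonneg hγ0 (mul_nonneg hw.1 (sub_nonneg.2 hk1))]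
      have hγvw := mul_le_mul_of_nonneg_right hγQ hvw
      constructor
      · refine le_of_mul_le_mul_left ?_ hQpos
        nlinarith [mul_le_mul_of_nonneg_right hk1 (mul_nonneg (sub_nonneg.2 hηT.le) hvw)]
      · refine le_of_mul_le_mul_left ?_ hQpos
        nlinarith [mul_le_mul_of_nonneg_left hQ hk, mul_le_mul_of_nonneg_left hkv hQpos.le]
    · have hγ1 : γ ≤ 1 := by nlinarith
      have hγQ : γ * (T - w - k * (η - w)) ≤ T - η := by nlinarith
      have hγη : γ * v w ≤ v η := by
        refine le_of_mul_le_mul_left ?_ hQpos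
        nlinarith
      exact ⟨hγη, by nlinarith⟩

theorem ConcaveOn.coneConstant_mul_sSup_le (hv : ConcaveOn ℝ (Icc 0 T) v)
    (hvnn : ∀ t ∈ Icc 0 T, 0 ≤ v t) (hη0 : 0 < η) (hηT : η < T) (hk : 0 ≤ k)
    (hkη : k * η < T) (hkv : k * v η ≤ v T) :
    ∀ t ∈ Icc η T, coneConstant T η k * sSup ((fun s => |v s|) '' Icc 0 T) ≤ v t := by
  intro t ht
  have hη : η ∈ Icc 0 T := ⟨hη0.le, hηT.le⟩
  have hT : T ∈ Icc 0 T := right_mem_Icc.2 (hη0.trans hηT).le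
  refine le_trans ?_ (hv.min_le_of_mem_Icc hη hT ht)
  rw [← smul_eq_mul, ← Real.sSup_smul_of_nonneg (coneConstant_nonneg hη0 hηT hk hkη)]
  refine Real.sSup_le ?_ (le_min (hvnn η hη) (hvnn T hT))
  rintro _ ⟨_, ⟨s, hs, rfl⟩, rfl⟩
  change coneConstant T η k * |v s| ≤ _
  rw [abs_of_nonneg (hvnn s hs)]
  exact hv.coneConstant_mul_le_min hvnn hs hη0 hηT hk hkη hkv

end ConcaveBoundary

theorem stmt_9_general (T η α β D γ : ℝ) (hT : 0 < T) (hη0 : 0 < η) (hηT : η < T)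
    (hα : 0 < α)
    (hβ : 0 ≤ β) (hβ2 : β < (2 * T - α * η ^ 2) / (α * η ^ 2 - 2 * η + 2 * T))
    (hD : D = (α * η ^ 2 - 2 * T) - β * (2 * η - α * η ^ 2 - 2 * T))
    (hγ : γ = min (η / T) (min (α * (β + 1) * η ^ 2 / (2 * T))
      (α * (β + 1) * η * (T - η) / (2 * T - α * (β + 1) * η ^ 2))))
    (f : ℝ → ℝ) (hf : ContinuousOn f (Set.Ici 0))
    (hfnn : ∀ x : ℝ, 0 ≤ x → 0 ≤ f x)
    (a : ℝ → ℝ) (ha : ContinuousOn a (Set.Icc 0 T))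
    (hann : ∀ t ∈ Set.Icc (0:ℝ) T, 0 ≤ a t)
    (u : ℝ → ℝ) (hu_cont : ContinuousOn u (Set.Icc 0 T))
    (hu_nn : ∀ t ∈ Set.Icc (0:ℝ) T, 0 ≤ u t)
    (Au : ℝ → ℝ)
    (hAu : ∀ t : ℝ, Au t =
      ((β * (2 * T - α * η ^ 2) - 2 * β * (1 - α * η) * t) / D) *
        (∫ s in (0:ℝ)..η, (η - s) * (a s * f (u s)))
      + ((α * β * η - α * (β - 1) * t) / D) *
        (∫ s in (0:ℝ)..η, (η - s) ^ 2 * (a s * f (u s)))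
      + ((2 * (β - 1) * t - 2 * β * η) / D) *
        (∫ s in (0:ℝ)..T, (T - s) * (a s * f (u s)))
      - ∫ s in (0:ℝ)..t, (t - s) * (a s * f (u s))) :
    (∀ t ∈ Set.Icc (0:ℝ) T, 0 ≤ Au t) ∧
    (∀ t ∈ Set.Icc η T,
      γ * sSup ((fun s => |Au s|) '' Set.Icc (0:ℝ) T) ≤ Au t) := by
  subst hD hγ
  have hden : 0 < α * η ^ 2 - 2 * η + 2 * T := by nlinarith
  have hkβ : α * η * (β + 1) / 2 * η < T - (T - η) * β := by
    nlinarith [(lt_div_iff₀ hden).1 hβ2]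
  have hD : bvpDenom T η α β ≠ 0 := (by unfold bvpDenom; linarith : bvpDenom T η α β < 0).ne
  have hγ₂ : α * (β + 1) * η ^ 2 / (2 * T) = α * η * (β + 1) / 2 * η / T := by ring
  have hγ₃ : α * (β + 1) * η * (T - η) / (2 * T - α * (β + 1) * η ^ 2) =
      α * η * (β + 1) / 2 * (T - η) / (T - α * η * (β + 1) / 2 * η) := by
    rw [div_eq_div_iff (by nlinarith) (by nlinarith)]
    ring
  set k := α * η * (β + 1) / 2
  have hk : 0 ≤ k := by positivity
  have hkη : k * η < T := by nlinarith
  have hAuA : Au = bvpSolution T η α β fun s => a s * f (u s) := funext fun t => by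
    rw [hAu t]
    simp only [bvpSolution, bvpIntercept, bvpSlope, bvpDenom]
    ring
  obtain ⟨G, hG, hG0, hGg⟩ := ContinuousOn.exists_continuous_nonneg_eqOn_Icc hT.le
    (ha.mul (hf.comp hu_cont fun t ht => hu_nn t ht))
    fun t ht => mul_nonneg (hann t ht) (hfnn _ (hu_nn t ht))
  set v := bvpSolution T η α β G
  have hAuv : EqOn Au v (Icc 0 T) := hAuA ▸ bvpSolution_eqOn hGg.symm ⟨hη0.le, hηT.le⟩
  have hv : ConcaveOn ℝ (Icc 0 T) v :=
    (concaveOn_bvpSolution hG hG0).subset (subset_univ _) (convex_Icc 0 T)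
  have hkv : k * v η ≤ v T :=
    (hv.subset (Icc_subset_Icc le_rfl hηT.le) (convex_Icc 0 η)).mul_le_of_integral_boundary
      hη0.le hα.le (continuous_bvpSolution hG).continuousOn (bvpSolution_zero hD)
      (bvpSolution_right hG hD)
  have hnn := hv.nonneg_of_boundary hη0.le hηT.le hβ hk (bvpSolution_zero hD) hkv hkβ
  refine ⟨fun t ht => hAuv ht ▸ hnn t ht, fun t ht => ?_⟩
  rw [hAuv ⟨hη0.le.trans ht.1, ht.2⟩, image_congr fun s hs => by rw [hAuv hs], hγ₂, hγ₃]
  exact hv.coneConstant_mul_sSup_le hnn hη0 hηT hk hkη hkv t ht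

theorem stmt_9 (T η α β D γ : ℝ) (hT : 0 < T) (hη0 : 0 < η) (hηT : η < T)
    (hα : 0 < α) (hα2 : α < 2 * T / η ^ 2)
    (hβ : 0 ≤ β) (hβ2 : β < (2 * T - α * η ^ 2) / (α * η ^ 2 - 2 * η + 2 * T))
    (hD : D = (α * η ^ 2 - 2 * T) - β * (2 * η - α * η ^ 2 - 2 * T))
    (hγ : γ = min (η / T) (min (α * (β + 1) * η ^ 2 / (2 * T))
      (α * (β + 1) * η * (T - η) / (2 * T - α * (β + 1) * η ^ 2))))
    (f : ℝ → ℝ) (hf : ContinuousOn f (Set.Ici 0))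
    (hfnn : ∀ x : ℝ, 0 ≤ x → 0 ≤ f x)
    (a : ℝ → ℝ) (ha : ContinuousOn a (Set.Icc 0 T))
    (hann : ∀ t ∈ Set.Icc (0:ℝ) T, 0 ≤ a t)
    (u : ℝ → ℝ) (hu_cont : ContinuousOn u (Set.Icc 0 T))
    (hu_nn : ∀ t ∈ Set.Icc (0:ℝ) T, 0 ≤ u t)
    (hu_cone : ∀ t ∈ Set.Icc η T,
      γ * sSup ((fun s => |u s|) '' Set.Icc (0:ℝ) T) ≤ u t)
    (Au : ℝ → ℝ)
    (hAu : ∀ t : ℝ, Au t =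
      ((β * (2 * T - α * η ^ 2) - 2 * β * (1 - α * η) * t) / D) *
        (∫ s in (0:ℝ)..η, (η - s) * (a s * f (u s)))
      + ((α * β * η - α * (β - 1) * t) / D) *
        (∫ s in (0:ℝ)..η, (η - s) ^ 2 * (a s * f (u s)))
      + ((2 * (β - 1) * t - 2 * β * η) / D) *
        (∫ s in (0:ℝ)..T, (T - s) * (a s * f (u s)))
      - ∫ s in (0:ℝ)..t, (t - s) * (a s * f (u s))) :
    (∀ t ∈ Set.Icc (0:ℝ) T, 0 ≤ Au t) ∧
    (∀ t ∈ Set.Icc η T,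
      γ * sSup ((fun s => |Au s|) '' Set.Icc (0:ℝ) T) ≤ Au t) :=
  stmt_9_general T η α β D γ hT hη0 hηT hα hβ hβ2 hD hγ f hf hfnn a ha hann u hu_cont hu_nn Au hAu
end

section
/- There exists a twice continuously differentiable function u : [0,3/4] → ℝ satisfying u''(t) + t² · u(t)² · ln(1 + u(t)) = 0 for all t ∈ (0,3/4), u(0) = (1/10) u(1/4), u(3/4) = 20 ∫₀^{1/4} u(s) ds, and u(t) > 0 for all t ∈ (0,3/4). -/
/-!
Shooting. Replace `f(u) = u² log (1 + u)` by its truncation to `[0, 50]`, which is globally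
Lipschitz and bounded, so that `u'' = -t² f(u)`, `u 0 = a`, `u' 0 = b` has a solution on
`[0, 3/4]` depending continuously on `(a, b)`. Solutions are concave, and on `[0, 1/4]` the
nonlinearity is too weak to undo a larger initial slope, so `b ↦ u(1/4)` is strictly increasing;
this gives a continuous choice `b = g a` with `u(1/4) = 10 a`. The defect `u(3/4) - 20 ∫₀^{1/4} u`
is positive for `a = 1/1000` (the problem is then almost linear and the linear defect is `a/2`) and
negative for `a = 1` (the nonlinearity then bends `u` down), so it vanishes for some `a`. Concavity
makes that solution positive, and it stays below `50`, where the truncation does nothing.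
-/

open Set Real MeasureTheory

noncomputable section

open Filter Topology in
theorem exists_continuousOn_eq_of_strictMono {α β γ : Type*} [TopologicalSpace α]
    [LinearOrder β] [Nonempty β] [TopologicalSpace β] [OrderTopology β]
    [LinearOrder γ] [TopologicalSpace γ] [OrderClosedTopology γ]
    {s : Set α} {F : α → β → γ} {c : α → γ} (hF : ∀ b, ContinuousOn (F · b) s)
    (hc : ContinuousOn c s) (hmono : ∀ a ∈ s, StrictMono (F a))
    (hex : ∀ a ∈ s, ∃ b, F a b = c a) :
    ∃ g : α → β, ContinuousOn g s ∧ ∀ a ∈ s, F a (g a) = c a := by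
  choose! g hg using hex
  refine ⟨g, fun a ha => tendsto_order.2 ⟨fun b hb => ?_, fun b hb => ?_⟩, hg⟩
  · filter_upwards [(hF b a ha).eventually_lt (hc a ha) (hg a ha ▸ hmono a ha hb),
      self_mem_nhdsWithin] with a' h' ha'
    exact (hmono a' ha').lt_iff_lt.1 (hg a' ha' ▸ h')
  · filter_upwards [(hc a ha).eventually_lt (hF b a ha) (hg a ha ▸ hmono a ha hb),
      self_mem_nhdsWithin] with a' h' ha'
    exact (hmono a' ha').lt_iff_lt.1 (hg a' ha' ▸ h')

lemma integral_sub_mul_sq (c d : ℝ) :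
    ∫ s in c..d, (d - s) * s ^ 2 = d * (d ^ 3 - c ^ 3) / 3 - (d ^ 4 - c ^ 4) / 4 := by
  simp_rw [show ∀ s : ℝ, (d - s) * s ^ 2 = d * s ^ 2 - s ^ 3 from fun s => by ring]
  rw [intervalIntegral.integral_sub ((by fun_prop : Continuous _).intervalIntegrable _ _)
    ((by fun_prop : Continuous _).intervalIntegrable _ _)]
  simp [integral_pow]
  ring

section Kernel

variable {φ : ℝ → ℝ} {c d : ℝ}

lemma integral_sub_mul_sq_mul_le (hφ : Continuous φ) (hcd : c ≤ d) {M : ℝ}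
    (hM : ∀ s ∈ Icc c d, φ s ≤ M) :
    ∫ s in c..d, (d - s) * (s ^ 2 * φ s) ≤ M * (d * (d ^ 3 - c ^ 3) / 3 - (d ^ 4 - c ^ 4) / 4) := by
  rw [← integral_sub_mul_sq, ← intervalIntegral.integral_const_mul]
  refine intervalIntegral.integral_mono_on hcd ((by fun_prop : Continuous _).intervalIntegrable _ _)
    ((by fun_prop : Continuous _).intervalIntegrable _ _) fun s hs => ?_
  have : 0 ≤ (d - s) * s ^ 2 := mul_nonneg (by linarith [hs.2]) (sq_nonneg s)
  nlinarith [hM s hs]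

lemma le_integral_sub_mul_sq_mul (hφ : Continuous φ) (hcd : c ≤ d) {m : ℝ}
    (hm : ∀ s ∈ Icc c d, m ≤ φ s) :
    m * (d * (d ^ 3 - c ^ 3) / 3 - (d ^ 4 - c ^ 4) / 4) ≤ ∫ s in c..d, (d - s) * (s ^ 2 * φ s) := by
  rw [← integral_sub_mul_sq, ← intervalIntegral.integral_const_mul]
  refine intervalIntegral.integral_mono_on hcd ((by fun_prop : Continuous _).intervalIntegrable _ _)
    ((by fun_prop : Continuous _).intervalIntegrable _ _) fun s hs => ?_
  have : 0 ≤ (d - s) * s ^ 2 := mul_nonneg (by linarith [hs.2]) (sq_nonneg s)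
  nlinarith [hm s hs]

end Kernel

def odeField (f : ℝ → ℝ) (t : ℝ) (z : ℝ × ℝ) : ℝ × ℝ := (z.2, -(t ^ 2 * f z.1))

lemma lipschitzWith_odeField {f : ℝ → ℝ} {K : NNReal} (hf : LipschitzWith K f) (hK : 1 ≤ K)
    {t : ℝ} (ht : t ^ 2 ≤ 1) : LipschitzWith K (odeField f t) := by
  refine LipschitzWith.of_dist_le_mul fun z w => ?_
  have hK' : (1 : ℝ) ≤ K := hK
  have hz : dist z.1 w.1 ≤ dist z w := (le_max_left _ _).trans_eq Prod.dist_eq.symm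
  have hw : dist z.2 w.2 ≤ dist z w := (le_max_right _ _).trans_eq Prod.dist_eq.symm
  have hfz : dist (f z.1) (f w.1) ≤ K * dist z w := (hf.dist_le_mul _ _).trans (by gcongr)
  rw [Prod.dist_eq]
  refine max_le (hw.trans (le_mul_of_one_le_left dist_nonneg hK')) ?_
  rw [odeField, odeField, Real.dist_eq,
    show -(t ^ 2 * f z.1) - -(t ^ 2 * f w.1) = t ^ 2 * (f w.1 - f z.1) by ring,
    abs_mul, abs_of_nonneg (sq_nonneg t), ← Real.dist_eq, dist_comm]
  nlinarith [dist_nonneg (x := f z.1) (y := f w.1), sq_nonneg t]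

/-- Continuity on all of `ℝ`, not just on `[0, T]`, makes every integral below trivially
integrable. -/
structure IsTraj (f : ℝ → ℝ) (T : ℝ) (u v : ℝ → ℝ) : Prop where
  continuous_u : Continuous u
  continuous_v : Continuous v
  hasDerivWithinAt_u : ∀ t ∈ Icc 0 T, HasDerivWithinAt u (v t) (Icc 0 T) t
  hasDerivWithinAt_v : ∀ t ∈ Icc 0 T, HasDerivWithinAt v (-(t ^ 2 * f (u t))) (Icc 0 T) t

namespace IsTraj

variable {f : ℝ → ℝ} {T : ℝ} {u v : ℝ → ℝ}

lemma of_hasDerivWithinAt (hT : 0 ≤ T) {z : ℝ → ℝ × ℝ}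
    (hz : ∀ t ∈ Icc 0 T, HasDerivWithinAt z (odeField f t (z t)) (Icc 0 T) t) :
    IsTraj f T (fun t => (z (projIcc 0 T hT t)).1) (fun t => (z (projIcc 0 T hT t)).2) := by
  have hcont : Continuous fun t => z (projIcc 0 T hT t) :=
    ContinuousOn.comp_continuous (fun t ht => (hz t ht).continuousWithinAt)
      (continuous_subtype_val.comp continuous_projIcc) fun t => (projIcc 0 T hT t).2
  have heq : EqOn (fun t => z (projIcc 0 T hT t)) z (Icc 0 T) := fun t ht => by
    simp only [projIcc_of_mem hT ht]
  have hderiv (t : ℝ) (ht : t ∈ Icc 0 T) : HasDerivWithinAt (fun t => z (projIcc 0 T hT t))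
      (odeField f t (z (projIcc 0 T hT t))) (Icc 0 T) t := by
    rw [projIcc_of_mem hT ht]; exact (hz t ht).congr heq (heq ht)
  exact ⟨continuous_fst.comp hcont, continuous_snd.comp hcont,
    fun t ht => (hderiv t ht).fst, fun t ht => (hderiv t ht).snd⟩

lemma hasDerivWithinAt_odeField (h : IsTraj f T u v) {t : ℝ} (ht : t ∈ Icc 0 T) :
    HasDerivWithinAt (fun s => (u s, v s)) (odeField f t (u t, v t)) (Icc 0 T) t :=
  (h.hasDerivWithinAt_u t ht).prodMk (h.hasDerivWithinAt_v t ht)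

lemma hasDerivAt_u (h : IsTraj f T u v) {t : ℝ} (ht : t ∈ Ioo 0 T) : HasDerivAt u (v t) t :=
  (h.hasDerivWithinAt_u t (Ioo_subset_Icc_self ht)).hasDerivAt (Icc_mem_nhds ht.1 ht.2)

lemma hasDerivAt_v (h : IsTraj f T u v) {t : ℝ} (ht : t ∈ Ioo 0 T) :
    HasDerivAt v (-(t ^ 2 * f (u t))) t :=
  (h.hasDerivWithinAt_v t (Ioo_subset_Icc_self ht)).hasDerivAt (Icc_mem_nhds ht.1 ht.2)

lemma continuous_forcing (h : IsTraj f T u v) (hf : Continuous f) :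
    Continuous fun s => s ^ 2 * f (u s) := by
  have := h.continuous_u; fun_prop

lemma sub_eq_integral_v (h : IsTraj f T u v) {c d : ℝ} (hc : 0 ≤ c) (hcd : c ≤ d) (hd : d ≤ T) :
    u d - u c = ∫ s in c..d, v s :=
  (intervalIntegral.integral_eq_sub_of_hasDerivAt_of_le hcd h.continuous_u.continuousOn
    (fun _ hx => h.hasDerivAt_u ⟨hc.trans_lt hx.1, hx.2.trans_le hd⟩)
    (h.continuous_v.intervalIntegrable c d)).symm

lemma v_sub_eq_integral (h : IsTraj f T u v) (hf : Continuous f) {c d : ℝ} (hc : 0 ≤ c)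
    (hcd : c ≤ d) (hd : d ≤ T) : v d - v c = -∫ s in c..d, s ^ 2 * f (u s) := by
  rw [← intervalIntegral.integral_neg]
  exact (intervalIntegral.integral_eq_sub_of_hasDerivAt_of_le hcd h.continuous_v.continuousOn
    (fun _ hx => h.hasDerivAt_v ⟨hc.trans_lt hx.1, hx.2.trans_le hd⟩)
    ((h.continuous_forcing hf).neg.intervalIntegrable c d)).symm

lemma antitoneOn_v (h : IsTraj f T u v) (hf : Continuous f) (hf₀ : ∀ x, 0 ≤ f x) :
    AntitoneOn v (Icc 0 T) := by
  intro c hc d hd hcd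
  have := h.v_sub_eq_integral hf hc.1 hcd hd.2
  have : 0 ≤ ∫ s in c..d, s ^ 2 * f (u s) :=
    intervalIntegral.integral_nonneg hcd fun s _ => mul_nonneg (sq_nonneg s) (hf₀ _)
  linarith

lemma le_tangent (h : IsTraj f T u v) (hf : Continuous f) (hf₀ : ∀ x, 0 ≤ f x) {x y : ℝ}
    (hx : x ∈ Icc 0 T) (hy : y ∈ Icc 0 T) : u x ≤ u y + (x - y) * v y := by
  have hv := h.antitoneOn_v hf hf₀
  have hvi := h.continuous_v.intervalIntegrable (μ := volume)
  rcases le_total y x with hyx | hxy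
  · have hint : ∫ s in y..x, v s ≤ ∫ s in y..x, v y :=
      intervalIntegral.integral_mono_on hyx (hvi y x) intervalIntegrable_const fun s hs =>
        hv hy ⟨hy.1.trans hs.1, hs.2.trans hx.2⟩ hs.1
    rw [intervalIntegral.integral_const, smul_eq_mul] at hint
    linarith [h.sub_eq_integral_v hy.1 hyx hx.2]
  · have hint : ∫ s in x..y, v y ≤ ∫ s in x..y, v s :=
      intervalIntegral.integral_mono_on hxy intervalIntegrable_const (hvi x y) fun s hs =>
        hv ⟨hx.1.trans hs.1, hs.2.trans hy.2⟩ hy hs.2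
    rw [intervalIntegral.integral_const, smul_eq_mul] at hint
    linarith [h.sub_eq_integral_v hx.1 hxy hy.2]

lemma pos_of_pos_at_endpoints (h : IsTraj f T u v) (hf : Continuous f) (hf₀ : ∀ x, 0 ≤ f x)
    {c d : ℝ} (hc : 0 ≤ c) (hd : d ≤ T) (huc : 0 < u c) (hud : 0 < u d) :
    ∀ t ∈ Icc c d, 0 < u t := by
  intro t ht
  have htT : t ∈ Icc 0 T := ⟨hc.trans ht.1, ht.2.trans hd⟩
  rcases le_total 0 (v t) with hvt | hvt
  · have := h.le_tangent hf hf₀ ⟨hc, ht.1.trans (ht.2.trans hd)⟩ htT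
    nlinarith [ht.1]
  · have := h.le_tangent hf hf₀ ⟨hc.trans (ht.1.trans ht.2), hd⟩ htT
    nlinarith [ht.2]

/-- Taylor's formula with integral remainder. -/
lemma eq_sub_integral (h : IsTraj f T u v) (hf : Continuous f) {c d : ℝ} (hc : 0 ≤ c)
    (hcd : c ≤ d) (hd : d ≤ T) :
    u d = u c + (d - c) * v c - ∫ s in c..d, (d - s) * (s ^ 2 * f (u s)) := by
  have hmin : min c d = c := min_eq_left hcd
  have hmax : max c d = d := max_eq_right hcd
  have hparts := intervalIntegral.integral_mul_deriv_eq_deriv_mul_of_hasDerivAt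
    (u := fun s => d - s) (u' := fun _ => -1) (v := v) (v' := fun s => -(s ^ 2 * f (u s)))
    (by fun_prop) h.continuous_v.continuousOn
    (fun s _ => by simpa using (hasDerivAt_id s).const_sub d)
    (fun s hs => h.hasDerivAt_v ⟨hc.trans_lt (hmin ▸ hs.1), (hmax ▸ hs.2).trans_le hd⟩)
    (intervalIntegrable_const (μ := volume)) ((h.continuous_forcing hf).neg.intervalIntegrable c d)
  simp only [sub_self, zero_mul, neg_one_mul, intervalIntegral.integral_neg, mul_neg] at hparts
  linarith [h.sub_eq_integral_v hc hcd hd]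

lemma dist_le {u₁ v₁ u₂ v₂ : ℝ → ℝ} {K : NNReal} (h₁ : IsTraj f T u₁ v₁) (h₂ : IsTraj f T u₂ v₂)
    (hf : LipschitzWith K f) (hK : 1 ≤ K) (hT : T ≤ 1) {t : ℝ} (ht : t ∈ Icc 0 T) :
    dist (u₁ t, v₁ t) (u₂ t, v₂ t) ≤ dist (u₁ 0, v₁ 0) (u₂ 0, v₂ 0) * exp (K * t) := by
  have hderiv {u v : ℝ → ℝ} (h : IsTraj f T u v) (s : ℝ) (hs : s ∈ Ico 0 T) :
      HasDerivWithinAt (fun s => (u s, v s)) (odeField f s (u s, v s)) (Ici s) s :=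
    (h.hasDerivWithinAt_odeField (Ico_subset_Icc_self hs)).mono_of_mem_nhdsWithin
      (Icc_mem_nhdsGE_of_mem hs)
  have hlip (s : ℝ) (hs : s ∈ Ico 0 T) : LipschitzOnWith K (odeField f s) univ :=
    (lipschitzWith_odeField hf hK (by nlinarith [hs.1, hs.2])).lipschitzOnWith
  simpa using dist_le_of_trajectories_ODE_of_mem hlip
    (h₁.continuous_u.prodMk h₁.continuous_v).continuousOn (hderiv h₁) (fun _ _ => trivial)
    (h₂.continuous_u.prodMk h₂.continuous_v).continuousOn (hderiv h₂) (fun _ _ => trivial)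
    le_rfl t ht

lemma abs_sub_sub_mul_le {u₁ v₁ u₂ v₂ : ℝ → ℝ} {K : NNReal} (h₁ : IsTraj f T u₁ v₁)
    (h₂ : IsTraj f T u₂ v₂) (hf : LipschitzWith K f) (hu : u₁ 0 = u₂ 0) {t M : ℝ}
    (ht : t ∈ Icc 0 T) (hM : ∀ s ∈ Icc 0 t, |u₁ s - u₂ s| ≤ M) :
    |u₁ t - u₂ t - (v₁ 0 - v₂ 0) * t| ≤ K * M * (t ^ 4 / 12) := by
  have := hf.continuous
  have := h₁.continuous_u
  have := h₂.continuous_u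
  have hφ : Continuous fun s => f (u₁ s) - f (u₂ s) := by fun_prop
  have hφM (s : ℝ) (hs : s ∈ Icc 0 t) : |f (u₁ s) - f (u₂ s)| ≤ K * M :=
    (hf.dist_le_mul _ _).trans (mul_le_mul_of_nonneg_left (hM s hs) K.coe_nonneg)
  have hup := integral_sub_mul_sq_mul_le hφ ht.1 fun s hs => (le_abs_self _).trans (hφM s hs)
  have hlo := le_integral_sub_mul_sq_mul hφ ht.1 fun s hs => neg_le_of_abs_le (hφM s hs)
  have hkernel : t * (t ^ 3 - 0 ^ 3) / 3 - (t ^ 4 - 0 ^ 4) / 4 = t ^ 4 / 12 := by ring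
  rw [hkernel] at hup hlo
  have hrem : u₁ t - u₂ t - (v₁ 0 - v₂ 0) * t =
      -∫ s in (0 : ℝ)..t, (t - s) * (s ^ 2 * (f (u₁ s) - f (u₂ s))) := by
    simp_rw [mul_sub]
    rw [intervalIntegral.integral_sub ((by fun_prop : Continuous _).intervalIntegrable _ _)
      ((by fun_prop : Continuous _).intervalIntegrable _ _),
      h₁.eq_sub_integral hf.continuous le_rfl ht.1 ht.2,
      h₂.eq_sub_integral hf.continuous le_rfl ht.1 ht.2, hu]
    ring
  rw [hrem, abs_neg, abs_le]
  constructor <;> linarith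

lemma lt_of_v_zero_lt {u₁ v₁ u₂ v₂ : ℝ → ℝ} {K : NNReal} (h₁ : IsTraj f T u₁ v₁)
    (h₂ : IsTraj f T u₂ v₂) (hf : LipschitzWith K f) {τ : ℝ} (hτ : τ ∈ Ioc 0 T)
    (hKτ : K * τ ^ 4 < 6) (hu : u₁ 0 = u₂ 0) (hv : v₂ 0 < v₁ 0) : u₂ τ < u₁ τ := by
  obtain ⟨x₀, hx₀, hmax⟩ := isCompact_Icc.exists_isMaxOn (nonempty_Icc.2 hτ.1.le)
    (h₁.continuous_u.sub h₂.continuous_u).abs.continuousOn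
  set M := |u₁ x₀ - u₂ x₀|
  set δ := v₁ 0 - v₂ 0
  set κ := K * τ ^ 4 / 12
  have hM' (s : ℝ) (hs : s ∈ Icc 0 τ) : |u₁ s - u₂ s| ≤ M := hmax hs
  have hdev (t : ℝ) (ht : t ∈ Icc 0 τ) : |u₁ t - u₂ t - δ * t| ≤ κ * M := by
    refine (h₁.abs_sub_sub_mul_le h₂ hf hu ⟨ht.1, ht.2.trans hτ.2⟩ fun s hs =>
      hM' s ⟨hs.1, hs.2.trans ht.2⟩).trans ?_
    have := pow_le_pow_left₀ ht.1 ht.2 4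
    have : 0 ≤ (K : ℝ) * M := mul_nonneg K.coe_nonneg (abs_nonneg _)
    simp only [κ]
    nlinarith
  -- `M ≤ δ τ + κ M` and `u₁ τ - u₂ τ ≥ δ τ - κ M` force `u₁ τ > u₂ τ` once `κ < 1/2`.
  have hδτ : 0 < δ * τ := mul_pos (sub_pos.2 hv) hτ.1
  have hκ : κ < 1 / 2 := by simp only [κ]; linarith
  have hκ₀ : 0 ≤ κ := by positivity
  have hM : M ≤ δ * τ + κ * M := by
    have := abs_sub_abs_le_abs_sub (u₁ x₀ - u₂ x₀) (δ * x₀)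
    rw [abs_of_nonneg (mul_nonneg (sub_pos.2 hv).le hx₀.1)] at this
    nlinarith [hdev x₀ hx₀, hx₀.2]
  have hτdev := (abs_le.1 (hdev τ ⟨hτ.1.le, le_rfl⟩)).1
  nlinarith [mul_le_mul_of_nonneg_left hM hκ₀, abs_nonneg (u₁ x₀ - u₂ x₀)]

end IsTraj

def nonlin (y : ℝ) : ℝ := y ^ 2 * log (1 + y)

def truncNonlin (x : ℝ) : ℝ := nonlin (projIcc (0 : ℝ) 50 (by norm_num) x)

lemma log_fiftyOne_le_four : log 51 ≤ 4 := by
  rw [log_le_iff_le_exp (by norm_num), show (4 : ℝ) = (4 : ℕ) by norm_num, ← exp_one_pow]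
  calc (51 : ℝ) ≤ 2.7182818283 ^ 4 := by norm_num
    _ ≤ exp 1 ^ 4 := by gcongr; exact exp_one_gt_d9.le

lemma nonlin_nonneg {y : ℝ} (hy : 0 ≤ y) : 0 ≤ nonlin y :=
  mul_nonneg (sq_nonneg y) (log_nonneg (by linarith))

lemma monotoneOn_nonlin : MonotoneOn nonlin (Ici 0) := by
  intro x (hx : 0 ≤ x) y (hy : 0 ≤ y) hxy
  exact mul_le_mul (pow_le_pow_left₀ hx hxy 2) (log_le_log (by linarith) (by linarith))
    (log_nonneg (by linarith)) (sq_nonneg y)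

lemma nonlin_le_cube {y : ℝ} (hy : 0 ≤ y) : nonlin y ≤ y ^ 3 := by
  have : log (1 + y) ≤ y := by linarith [log_le_sub_one_of_pos (by linarith : 0 < 1 + y)]
  calc nonlin y ≤ y ^ 2 * y := mul_le_mul_of_nonneg_left this (sq_nonneg y)
    _ = y ^ 3 := by ring

lemma nonlin_le_of_mem_Icc {y : ℝ} (hy : y ∈ Icc (0 : ℝ) 50) : nonlin y ≤ 10000 := by
  have hlog : log (1 + y) ≤ 4 :=
    (log_le_log (by linarith [hy.1]) (by linarith [hy.2])).trans log_fiftyOne_le_four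
  calc nonlin y ≤ 50 ^ 2 * 4 :=
        mul_le_mul (pow_le_pow_left₀ hy.1 hy.2 2) hlog (log_nonneg (by linarith [hy.1]))
          (by norm_num)
    _ = 10000 := by norm_num

lemma hundred_le_nonlin_ten : 100 ≤ nonlin 10 := by
  have : 1 ≤ log (1 + 10) := by
    rw [le_log_iff_exp_le (by norm_num)]; linarith [exp_one_lt_d9]
  unfold nonlin; nlinarith

lemma lipschitzOnWith_nonlin : LipschitzOnWith 500 nonlin (Icc 0 50) := by
  refine (convex_Icc 0 50).lipschitzOnWith_of_nnnorm_hasDerivWithin_le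
    (f' := fun y => 2 * y * log (1 + y) + y ^ 2 * (1 + y)⁻¹) (fun y hy => ?_) (fun y hy => ?_)
  · have hy1 : (1 + y) ≠ 0 := by linarith [hy.1]
    have := (hasDerivAt_pow 2 y).fun_mul (((hasDerivAt_id y).const_add 1).log hy1)
    convert this.hasDerivWithinAt using 1
    · rfl
    · simp
  · obtain ⟨hy0, hy50⟩ := hy
    have hlog0 : 0 ≤ log (1 + y) := log_nonneg (by linarith)
    have hlog4 : log (1 + y) ≤ 4 :=
      (log_le_log (by linarith) (by linarith)).trans log_fiftyOne_le_four
    have hfrac : y ^ 2 * (1 + y)⁻¹ ≤ y := by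
      rw [← div_eq_mul_inv, div_le_iff₀ (by linarith)]; nlinarith
    have hfrac0 : 0 ≤ y ^ 2 * (1 + y)⁻¹ := by positivity
    rw [← NNReal.coe_le_coe, coe_nnnorm, Real.norm_eq_abs, abs_le]
    push_cast
    constructor <;> nlinarith

lemma truncNonlin_eq {x : ℝ} (hx : x ∈ Icc (0 : ℝ) 50) : truncNonlin x = nonlin x := by
  rw [truncNonlin, projIcc_of_mem _ hx]

lemma truncNonlin_nonneg (x : ℝ) : 0 ≤ truncNonlin x :=
  nonlin_nonneg (projIcc (0 : ℝ) 50 (by norm_num) x).2.1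

lemma truncNonlin_le (x : ℝ) : truncNonlin x ≤ 10000 :=
  nonlin_le_of_mem_Icc (projIcc (0 : ℝ) 50 (by norm_num) x).2

lemma monotone_truncNonlin : Monotone truncNonlin := fun x y hxy =>
  monotoneOn_nonlin (projIcc (0 : ℝ) 50 (by norm_num) x).2.1
    (projIcc (0 : ℝ) 50 (by norm_num) y).2.1 (monotone_projIcc _ hxy)

lemma truncNonlin_le_cube {x : ℝ} (hx : 0 ≤ x) : truncNonlin x ≤ x ^ 3 := by
  have hp := (projIcc (0 : ℝ) 50 (by norm_num) x).2
  have hpx : (projIcc (0 : ℝ) 50 (by norm_num) x : ℝ) ≤ x := by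
    rw [coe_projIcc]; exact max_le hx (min_le_right _ _)
  exact (nonlin_le_cube hp.1).trans (pow_le_pow_left₀ hp.1 hpx 3)

lemma lipschitzWith_truncNonlin : LipschitzWith 500 truncNonlin := by
  have := (lipschitzOnWith_iff_restrict.1 lipschitzOnWith_nonlin).comp
    (LipschitzWith.projIcc (by norm_num : (0 : ℝ) ≤ 50))
  rwa [mul_one] at this

lemma continuous_truncNonlin : Continuous truncNonlin := lipschitzWith_truncNonlin.continuous

lemma exists_isTraj_truncNonlin (a b : ℝ) :
    ∃ u v : ℝ → ℝ, IsTraj truncNonlin (3 / 4) u v ∧ u 0 = a ∧ v 0 = b := by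
  set x₀ : ℝ × ℝ := (a, b)
  -- On the ball of radius `3‖x₀‖ + 16875` the field is bounded by `4‖x₀‖ + 22500`,
  -- and that bound times the length `3/4` of the time interval is exactly the radius.
  have hpl : IsPicardLindelof (odeField truncNonlin) (tmin := 0) (tmax := 3 / 4)
      ⟨0, by norm_num⟩ x₀ (3 * ‖x₀‖₊ + 16875) 0 (4 * ‖x₀‖₊ + 22500) 500 := by
    refine ⟨fun t ht => ?_, fun x _ => ?_, fun t ht x hx => ?_, ?_⟩
    · exact (lipschitzWith_odeField lipschitzWith_truncNonlin (by norm_num)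
        (by nlinarith [ht.1, ht.2])).lipschitzOnWith
    · unfold odeField; fun_prop
    · have hx' : ‖x‖ ≤ 4 * ‖x₀‖ + 16875 := by
        have := norm_sub_norm_le x x₀
        have := mem_closedBall_iff_norm.1 hx
        push_cast at this
        linarith
      have hG := truncNonlin_le x.1
      have hG₀ := truncNonlin_nonneg x.1
      have ht2 : t ^ 2 ≤ 1 := by nlinarith [ht.1, ht.2]
      push_cast
      refine max_le ((norm_snd_le x).trans (by linarith)) ?_
      rw [odeField, norm_neg, Real.norm_eq_abs, abs_of_nonneg (by positivity)]
      nlinarith [norm_nonneg x₀, sq_nonneg t]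
    · push_cast
      norm_num
      linarith [norm_nonneg x₀]
  obtain ⟨z, hz0, hz⟩ := hpl.exists_eq_forall_mem_Icc_hasDerivWithinAt₀
  refine ⟨_, _, IsTraj.of_hasDerivWithinAt (by norm_num) hz, ?_, ?_⟩ <;>
    simp [hz0, x₀]

def shootU (a b : ℝ) : ℝ → ℝ := (exists_isTraj_truncNonlin a b).choose

def shootV (a b : ℝ) : ℝ → ℝ := (exists_isTraj_truncNonlin a b).choose_spec.choose

lemma isTraj_shoot (a b : ℝ) : IsTraj truncNonlin (3 / 4) (shootU a b) (shootV a b) :=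
  (exists_isTraj_truncNonlin a b).choose_spec.choose_spec.1

lemma shootU_zero (a b : ℝ) : shootU a b 0 = a :=
  (exists_isTraj_truncNonlin a b).choose_spec.choose_spec.2.1

lemma shootV_zero (a b : ℝ) : shootV a b 0 = b :=
  (exists_isTraj_truncNonlin a b).choose_spec.choose_spec.2.2

lemma dist_shootU_le (p q : ℝ × ℝ) {t : ℝ} (ht : t ∈ Icc (0 : ℝ) (3 / 4)) :
    dist (shootU p.1 p.2 t) (shootU q.1 q.2 t) ≤ exp 375 * dist p q := by
  have h := (isTraj_shoot p.1 p.2).dist_le (isTraj_shoot q.1 q.2) lipschitzWith_truncNonlin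
    (by norm_num) (by norm_num) ht
  simp only [shootU_zero, shootV_zero, Prod.mk.eta] at h
  have hexp : exp (500 * t) ≤ exp 375 := exp_le_exp.2 (by linarith [ht.2])
  calc dist (shootU p.1 p.2 t) (shootU q.1 q.2 t)
      ≤ dist (shootU p.1 p.2 t, shootV p.1 p.2 t) (shootU q.1 q.2 t, shootV q.1 q.2 t) := by
        rw [Prod.dist_eq]; exact le_max_left _ _
    _ ≤ dist p q * exp (500 * t) := by simpa using h
    _ ≤ exp 375 * dist p q := by rw [mul_comm]; gcongr

lemma continuous_shootU_apply {t : ℝ} (ht : t ∈ Icc (0 : ℝ) (3 / 4)) :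
    Continuous fun p : ℝ × ℝ => shootU p.1 p.2 t :=
  (LipschitzWith.of_dist_le' fun p q => dist_shootU_le p q ht).continuous

lemma continuous_integral_shootU :
    Continuous fun p : ℝ × ℝ => ∫ s in (0 : ℝ)..1 / 4, shootU p.1 p.2 s := by
  refine (LipschitzWith.of_dist_le' (K := exp 375 / 4) fun p q => ?_).continuous
  rw [Real.dist_eq, ← intervalIntegral.integral_sub
    ((isTraj_shoot _ _).continuous_u.intervalIntegrable _ _)
    ((isTraj_shoot _ _).continuous_u.intervalIntegrable _ _)]
  have := intervalIntegral.norm_integral_le_of_norm_le_const (a := 0) (b := 1 / 4)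
    (f := fun s => shootU p.1 p.2 s - shootU q.1 q.2 s) fun s hs => by
      rw [uIoc_of_le (by norm_num)] at hs
      exact dist_shootU_le p q ⟨hs.1.le, hs.2.trans (by norm_num)⟩
  rw [Real.norm_eq_abs] at this
  linarith [show |(1 / 4 : ℝ) - 0| = 1 / 4 by norm_num]

lemma strictMono_shootU_quarter (a : ℝ) : StrictMono fun b => shootU a b (1 / 4) :=
  fun b₁ b₂ hb => (isTraj_shoot a b₂).lt_of_v_zero_lt (isTraj_shoot a b₁) lipschitzWith_truncNonlin
    ⟨by norm_num, by norm_num⟩ (by norm_num) (by rw [shootU_zero, shootU_zero])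
    (by rwa [shootV_zero, shootV_zero])

lemma exists_shootU_quarter_eq {a : ℝ} (ha : 0 ≤ a) : ∃ b, shootU a b (1 / 4) = 10 * a := by
  have hcont : ContinuousOn (fun b => shootU a b (1 / 4)) (Icc 0 (36 * a + 14)) :=
    ((continuous_shootU_apply ⟨by norm_num, by norm_num⟩).comp
      (continuous_const.prodMk continuous_id)).continuousOn
  have hlow : shootU a 0 (1 / 4) ≤ 10 * a := by
    have := (isTraj_shoot a 0).le_tangent continuous_truncNonlin truncNonlin_nonneg
      (x := 1 / 4) ⟨by norm_num, by norm_num⟩ (left_mem_Icc.2 (by norm_num))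
    rw [shootU_zero, shootV_zero] at this
    linarith
  have hhigh : 10 * a ≤ shootU a (36 * a + 14) (1 / 4) := by
    have h := isTraj_shoot a (36 * a + 14)
    have hD := integral_sub_mul_sq_mul_le (continuous_truncNonlin.comp h.continuous_u)
      (by norm_num : (0 : ℝ) ≤ 1 / 4) fun s _ => truncNonlin_le _
    have := h.eq_sub_integral continuous_truncNonlin le_rfl (by norm_num : (0 : ℝ) ≤ 1 / 4)
      (by norm_num)
    rw [shootU_zero, shootV_zero] at this
    norm_num at hD
    linarith
  obtain ⟨b, -, hb⟩ := intermediate_value_Icc (by linarith) hcont ⟨hlow, hhigh⟩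
  exact ⟨b, hb⟩

def bcDefect (u : ℝ → ℝ) : ℝ := u (3 / 4) - 20 * ∫ s in (0 : ℝ)..1 / 4, u s

lemma continuous_bcDefect_shootU : Continuous fun p : ℝ × ℝ => bcDefect (shootU p.1 p.2) :=
  (continuous_shootU_apply ⟨by norm_num, le_rfl⟩).sub
    (continuous_const.mul continuous_integral_shootU)

namespace IsTraj

variable {u v : ℝ → ℝ}

lemma truncNonlin_le_of_le (h : IsTraj truncNonlin (3 / 4) u v) (hb : 0 ≤ v 0) {t x : ℝ}
    (ht : t ∈ Icc (0 : ℝ) (3 / 4)) (hx : u 0 + t * v 0 ≤ x) {s : ℝ} (hs : s ∈ Icc 0 t) :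
    truncNonlin (u s) ≤ truncNonlin x := by
  refine monotone_truncNonlin ?_
  have := h.le_tangent continuous_truncNonlin truncNonlin_nonneg ⟨hs.1, hs.2.trans ht.2⟩
    (left_mem_Icc.2 (by norm_num))
  nlinarith [hs.2]

lemma integral_quarter_le (h : IsTraj truncNonlin (3 / 4) u v) :
    ∫ s in (0 : ℝ)..1 / 4, u s ≤ u 0 / 4 + v 0 / 32 := by
  have : ∫ s in (0 : ℝ)..1 / 4, u s ≤ ∫ s in (0 : ℝ)..1 / 4, (u 0 + s * v 0) :=
    intervalIntegral.integral_mono_on (by norm_num) (h.continuous_u.intervalIntegrable _ _)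
      ((by fun_prop : Continuous _).intervalIntegrable _ _) fun s hs => by
        have := h.le_tangent continuous_truncNonlin truncNonlin_nonneg
          ⟨hs.1, hs.2.trans (by norm_num)⟩ (left_mem_Icc.2 (by norm_num))
        linarith
  rw [intervalIntegral.integral_add intervalIntegrable_const
    ((continuous_mul_const _).intervalIntegrable _ _)] at this
  simp only [intervalIntegral.integral_const, intervalIntegral.integral_mul_const, integral_id,
    smul_eq_mul] at this
  linarith

lemma le_integral_quarter (h : IsTraj truncNonlin (3 / 4) u v) :
    u 0 / 4 + v (1 / 4) / 32 ≤ ∫ s in (0 : ℝ)..1 / 4, u s := by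
  have : ∫ s in (0 : ℝ)..1 / 4, (u 0 + s * v (1 / 4)) ≤ ∫ s in (0 : ℝ)..1 / 4, u s :=
    intervalIntegral.integral_mono_on (by norm_num)
      ((by fun_prop : Continuous _).intervalIntegrable _ _)
      (h.continuous_u.intervalIntegrable _ _) fun s hs => by
        have hsT : s ∈ Icc (0 : ℝ) (3 / 4) := ⟨hs.1, hs.2.trans (by norm_num)⟩
        have := h.le_tangent continuous_truncNonlin truncNonlin_nonneg
          (left_mem_Icc.2 (by norm_num)) hsT
        have := h.antitoneOn_v continuous_truncNonlin truncNonlin_nonneg hsT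
          ⟨by norm_num, by norm_num⟩ hs.2
        nlinarith [hs.1]
  rw [intervalIntegral.integral_add intervalIntegrable_const
    ((continuous_mul_const _).intervalIntegrable _ _)] at this
  simp only [intervalIntegral.integral_const, intervalIntegral.integral_mul_const, integral_id,
    smul_eq_mul] at this
  linarith

lemma le_v_quarter (h : IsTraj truncNonlin (3 / 4) u v) (hb : 0 ≤ v 0) :
    v 0 - truncNonlin (u 0 + v 0 / 4) / 192 ≤ v (1 / 4) := by
  have hint : ∫ s in (0 : ℝ)..1 / 4, s ^ 2 * truncNonlin (u s) ≤
      ∫ s in (0 : ℝ)..1 / 4, truncNonlin (u 0 + v 0 / 4) * s ^ 2 :=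
    intervalIntegral.integral_mono_on (by norm_num)
      ((h.continuous_forcing continuous_truncNonlin).intervalIntegrable _ _)
      ((by fun_prop : Continuous _).intervalIntegrable _ _) fun s hs => by
        rw [mul_comm]
        exact mul_le_mul_of_nonneg_right
          (h.truncNonlin_le_of_le hb ⟨by norm_num, by norm_num⟩ (by linarith) hs) (sq_nonneg s)
  rw [intervalIntegral.integral_const_mul, integral_pow] at hint
  linarith [h.v_sub_eq_integral continuous_truncNonlin le_rfl (by norm_num : (0 : ℝ) ≤ 1 / 4)
    (by norm_num)]

lemma le_v_zero_of_root (h : IsTraj truncNonlin (3 / 4) u v) (hroot : u (1 / 4) = 10 * u 0) :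
    36 * u 0 ≤ v 0 := by
  have := h.le_tangent continuous_truncNonlin truncNonlin_nonneg (x := 1 / 4)
    ⟨by norm_num, by norm_num⟩ (left_mem_Icc.2 (by norm_num))
  linarith

lemma v_zero_le_of_root (h : IsTraj truncNonlin (3 / 4) u v) (hroot : u (1 / 4) = 10 * u 0)
    (ha : 0 ≤ u 0) : v 0 ≤ 36 * u 0 + truncNonlin (u 0 + v 0 / 4) / 768 := by
  have hb : 0 ≤ v 0 := by linarith [h.le_v_zero_of_root hroot]
  have hD := integral_sub_mul_sq_mul_le (continuous_truncNonlin.comp h.continuous_u)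
    (by norm_num : (0 : ℝ) ≤ 1 / 4) (M := truncNonlin (u 0 + v 0 / 4)) fun s hs =>
      h.truncNonlin_le_of_le hb ⟨by norm_num, by norm_num⟩ (by linarith) hs
  norm_num at hD
  linarith [h.eq_sub_integral continuous_truncNonlin le_rfl (by norm_num : (0 : ℝ) ≤ 1 / 4)
    (by norm_num)]

lemma v_zero_le_of_root' (h : IsTraj truncNonlin (3 / 4) u v) (hroot : u (1 / 4) = 10 * u 0)
    (ha : 0 ≤ u 0) : v 0 ≤ 36 * u 0 + 10000 / 768 := by
  linarith [h.v_zero_le_of_root hroot ha, truncNonlin_le (u 0 + v 0 / 4)]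

lemma bcDefect_pos_of_root (h : IsTraj truncNonlin (3 / 4) u v) (hroot : u (1 / 4) = 10 * u 0)
    (ha : u 0 = 1 / 1000) : 0 < bcDefect u := by
  have ha₀ : 0 ≤ u 0 := by rw [ha]; norm_num
  have hb₀ := h.le_v_zero_of_root hroot
  -- The crude bound `v 0 ≤ 13.06` gives `u 0 + v 0 / 4 ≤ 3.27`, whence `v 0 ≤ 0.0816`.
  have hb : v 0 ≤ 0.0816 := by
    have := h.v_zero_le_of_root' hroot ha₀
    have := (monotone_truncNonlin (show u 0 + v 0 / 4 ≤ 3.27 by linarith)).trans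
      (truncNonlin_le_cube (by norm_num))
    linarith [h.v_zero_le_of_root hroot ha₀]
  have hD := integral_sub_mul_sq_mul_le (continuous_truncNonlin.comp h.continuous_u)
    (by norm_num : (0 : ℝ) ≤ 3 / 4) (M := 0.063 ^ 3) fun s hs =>
      (h.truncNonlin_le_of_le (by linarith) ⟨by norm_num, le_rfl⟩ (by linarith) hs).trans
        (truncNonlin_le_cube (by norm_num))
  norm_num at hD
  have := h.eq_sub_integral continuous_truncNonlin le_rfl (by norm_num : (0 : ℝ) ≤ 3 / 4) le_rfl
  rw [bcDefect]
  linarith [h.integral_quarter_le]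

lemma bcDefect_neg_of_root (h : IsTraj truncNonlin (3 / 4) u v) (hroot : u (1 / 4) = 10 * u 0)
    (ha : u 0 = 1) : bcDefect u < 0 := by
  have hb₀ := h.le_v_zero_of_root hroot
  have hb₁ := h.v_zero_le_of_root' hroot (by rw [ha]; norm_num)
  have hv : 23.7 ≤ v (1 / 4) := by
    have := h.le_v_quarter (by linarith)
    have := (monotone_truncNonlin (show u 0 + v 0 / 4 ≤ 13.3 by linarith)).trans
      (truncNonlin_le_cube (by norm_num))
    linarith
  have hint := h.le_integral_quarter
  have hu : u (1 / 4) = 10 := by rw [hroot, ha]; norm_num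
  rw [bcDefect]
  by_cases hbig : ∀ s ∈ Icc (1 / 4 : ℝ) (3 / 4), 10 ≤ u s
  · have hD := le_integral_sub_mul_sq_mul (continuous_truncNonlin.comp h.continuous_u)
      (by norm_num : (1 / 4 : ℝ) ≤ 3 / 4) (m := 100) fun s hs =>
        hundred_le_nonlin_ten.trans ((truncNonlin_eq ⟨by norm_num, by norm_num⟩).symm.trans_le
          (monotone_truncNonlin (hbig s hs)))
    have := h.eq_sub_integral continuous_truncNonlin (by norm_num : (0 : ℝ) ≤ 1 / 4)
      (by norm_num : (1 / 4 : ℝ) ≤ 3 / 4) le_rfl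
    norm_num at hD this
    linarith
  · -- Once `u` drops below `u (1/4) = 10` it is decreasing, so `u (3/4) < 10`.
    push Not at hbig
    obtain ⟨σ, hσ, huσ⟩ := hbig
    have hσT : σ ∈ Icc (0 : ℝ) (3 / 4) := ⟨by linarith [hσ.1], hσ.2⟩
    have h₁ := h.le_tangent continuous_truncNonlin truncNonlin_nonneg
      (⟨by norm_num, by norm_num⟩ : (1 / 4 : ℝ) ∈ Icc 0 (3 / 4)) hσT
    have h₂ := h.le_tangent continuous_truncNonlin truncNonlin_nonneg
      (⟨by norm_num, le_rfl⟩ : (3 / 4 : ℝ) ∈ Icc 0 (3 / 4)) hσT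
    have hvσ : v σ < 0 := by nlinarith [hσ.1]
    nlinarith [hσ.2]

lemma pos_of_bcDefect_eq_zero (h : IsTraj truncNonlin (3 / 4) u v)
    (hroot : u (1 / 4) = 10 * u 0) (ha : 0 < u 0) (hbc : bcDefect u = 0) :
    ∀ t ∈ Icc (0 : ℝ) (3 / 4), 0 < u t := by
  have hquarter := h.pos_of_pos_at_endpoints continuous_truncNonlin truncNonlin_nonneg le_rfl
    (by norm_num : (1 / 4 : ℝ) ≤ 3 / 4) ha (by linarith)
  have hint : 0 < ∫ s in (0 : ℝ)..1 / 4, u s :=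
    intervalIntegral.intervalIntegral_pos_of_pos_on (h.continuous_u.intervalIntegrable _ _)
      (fun s hs => hquarter s (Ioo_subset_Icc_self hs)) (by norm_num)
  have hend := h.pos_of_pos_at_endpoints continuous_truncNonlin truncNonlin_nonneg
    (by norm_num : (0 : ℝ) ≤ 1 / 4) le_rfl (by linarith) (by rw [bcDefect] at hbc; linarith)
  intro t ht
  rcases le_total t (1 / 4) with htq | htq
  · exact hquarter t ⟨ht.1, htq⟩
  · exact hend t ⟨htq, ht.2⟩

lemma le_fifty_of_root (h : IsTraj truncNonlin (3 / 4) u v) (hroot : u (1 / 4) = 10 * u 0)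
    (ha : u 0 ∈ Icc (0 : ℝ) 1) : ∀ t ∈ Icc (0 : ℝ) (3 / 4), u t ≤ 50 := by
  intro t ht
  have := h.le_tangent continuous_truncNonlin truncNonlin_nonneg ht (left_mem_Icc.2 (by norm_num))
  have := h.v_zero_le_of_root' hroot ha.1
  have := h.le_v_zero_of_root hroot
  nlinarith [ht.1, ht.2, ha.1, ha.2]

end IsTraj

theorem stmt_12 :
    ∃ u u' u'' : ℝ → ℝ,
      (∀ t ∈ Set.Icc (0:ℝ) (3 / 4), HasDerivWithinAt u (u' t) (Set.Icc 0 (3 / 4)) t) ∧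
      (∀ t ∈ Set.Icc (0:ℝ) (3 / 4), HasDerivWithinAt u' (u'' t) (Set.Icc 0 (3 / 4)) t) ∧
      ContinuousOn u'' (Set.Icc 0 (3 / 4)) ∧
      (∀ t ∈ Set.Ioo (0:ℝ) (3 / 4),
        u'' t + t ^ 2 * u t ^ 2 * Real.log (1 + u t) = 0) ∧
      u 0 = (1 / 10) * u (1 / 4) ∧
      u (3 / 4) = 20 * (∫ s in (0:ℝ)..(1 / 4), u s) ∧
      (∀ t ∈ Set.Ioo (0:ℝ) (3 / 4), 0 < u t) := by
  obtain ⟨g, hg, hgroot⟩ := exists_continuousOn_eq_of_strictMono (s := Icc (1 / 1000 : ℝ) 1)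
    (F := fun a b => shootU a b (1 / 4)) (c := fun a => 10 * a)
    (fun b => ((continuous_shootU_apply ⟨by norm_num, by norm_num⟩).comp
      (continuous_id.prodMk continuous_const)).continuousOn)
    (continuous_const.mul continuous_id).continuousOn (fun a _ => strictMono_shootU_quarter a)
    (fun a ha => exists_shootU_quarter_eq (by linarith [ha.1]))
  have hroot (a : ℝ) (ha : a ∈ Icc (1 / 1000 : ℝ) 1) :
      shootU a (g a) (1 / 4) = 10 * shootU a (g a) 0 := by
    rw [shootU_zero]; exact hgroot a ha
  obtain ⟨a, ha, hbc⟩ := intermediate_value_Icc' (by norm_num)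
    (continuous_bcDefect_shootU.comp_continuousOn (continuousOn_id.prodMk hg))
    ⟨((isTraj_shoot _ _).bcDefect_neg_of_root (hroot 1 (by norm_num)) (shootU_zero _ _)).le,
      ((isTraj_shoot _ _).bcDefect_pos_of_root (hroot _ (by norm_num)) (shootU_zero _ _)).le⟩
  replace hbc : bcDefect (shootU a (g a)) = 0 := hbc
  have h := isTraj_shoot a (g a)
  have hpos := h.pos_of_bcDefect_eq_zero (hroot a ha) (by rw [shootU_zero]; linarith [ha.1]) hbc
  have hle := h.le_fifty_of_root (hroot a ha)
    (by rw [shootU_zero]; exact ⟨by linarith [ha.1], ha.2⟩)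
  refine ⟨shootU a (g a), shootV a (g a), fun t => -(t ^ 2 * truncNonlin (shootU a (g a) t)),
    h.hasDerivWithinAt_u, h.hasDerivWithinAt_v,
    (h.continuous_forcing continuous_truncNonlin).neg.continuousOn, fun t ht => ?_, ?_,
    sub_eq_zero.1 hbc, fun t ht => hpos t (Ioo_subset_Icc_self ht)⟩
  · have ht' := Ioo_subset_Icc_self ht
    dsimp only
    rw [truncNonlin_eq ⟨(hpos t ht').le, hle t ht'⟩, nonlin]
    ring
  · rw [hroot a ha]; ring

end
end
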